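/- arXiv:2003.13134 — 6 statements merged into one kernel-verified Lean document; each statement's English description precedes it below -/
import Mathlib

section
/- If X is a semi-orderable Hausdorff space, then cws(X) ≤ 2. Moreover, cws(X) = 2 if and only if X is not orderable and has at most 2 connected components. -/
open Topology

/-- A weak selection for `X`: a choice function on (unordered) pairs,
encoded as a symmetric map `X → X → X` picking one of its two arguments. -/
structure WeakSelection (X : Type*) where
  toFun : X → X → X
  mem_pair : ∀ x y, toFun x y = x ∨ toFun x y = y
  comm : ∀ x y, toFun x y = toFun y x

namespace WeakSelection

variable {X : Type*}

/-- `x ≤_σ y` iff `σ {x, y} = x`. -/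
def le (σ : WeakSelection X) (x y : X) : Prop := σ.toFun x y = x

/-- `x <_σ y` iff `x ≤_σ y` and `x ≠ y`. -/
def lt (σ : WeakSelection X) (x y : X) : Prop := σ.le x y ∧ x ≠ y

/-- The selection topology `T_σ`, generated by the `≤_σ`-open intervals. -/
def selTop (σ : WeakSelection X) : TopologicalSpace X :=
  TopologicalSpace.generateFrom
    {s : Set X | ∃ a : X, s = {y | σ.lt y a} ∨ s = {y | σ.lt a y}}

/-- Continuity of a weak selection on a topological space. -/
def Continuous [TopologicalSpace X] (σ : WeakSelection X) : Prop :=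
  ∀ x y : X, σ.lt x y → ∃ U V : Set X, IsOpen U ∧ IsOpen V ∧ x ∈ U ∧ y ∈ V ∧
    ∀ s ∈ U, ∀ t ∈ V, σ.lt s t

end WeakSelection

/-- The supremum topology of the selection topologies of a family of weak
selections: the smallest topology containing all of them. -/
def supSelTop {X : Type*} (Sig : Set (WeakSelection X)) : TopologicalSpace X :=
  TopologicalSpace.generateFrom (⋃ σ ∈ Sig, {s : Set X | IsOpen[σ.selTop] s})

/-- The cws-number of a space: the least cardinality of a collection of
continuous weak selections whose selection topologies generate the topology. -/
noncomputable def cws (X : Type*) [t : TopologicalSpace X] : Cardinal :=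
  sInf {c : Cardinal | ∃ Sig : Set (WeakSelection X),
    (∀ σ ∈ Sig, σ.Continuous) ∧ supSelTop Sig = t ∧ Cardinal.mk ↥Sig = c}

/-- A space is orderable if its topology is the open-interval topology of some
linear order. -/
def IsOrderableTop (X : Type*) [t : TopologicalSpace X] : Prop :=
  ∃ l : LinearOrder X, t = TopologicalSpace.generateFrom
    {s : Set X | ∃ a : X, s = {x | l.lt x a} ∨ s = {x | l.lt a x}}

/-- A space is semi-orderable if it is the topological sum of two orderable
spaces, i.e. has a clopen partition into two orderable subspaces. -/
def SemiOrderable (X : Type*) [TopologicalSpace X] : Prop :=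
  ∃ A : Set X, IsClopen A ∧ IsOrderableTop ↥A ∧ IsOrderableTop ↥(Aᶜ)


/-!
Write `X` as the topological sum of orderable spaces `A` and `B`. For a clopen `L ⊆ A`, let
`σ_L` compare two points of the same summand by the order of that summand, and put `B` above
`A \ L` but below `L`; each `σ_L` is continuous. As soon as the summands are open in the
supremum topology, the rays of `σ_L` recover the order topologies of the summands, so the
supremum topology is the topology of `X`. The summands are open for `{σ_∅, σ_A}`, since
`A = (b, →)_{σ_A} ∩ (←, b)_{σ_∅}` for any `b ∈ B`; hence `cws X ≤ 2`. If `A` is not connected,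
there are `a₁ < a₂` and a clopen `L` with `(←, a₁] ⊆ L ⊆ (←, a₂)`. Then, for any `b ∈ B`, the
pieces `L`, `A \ L` and `B` are the `σ_L`-intervals `(b, a₂)`, `(a₁, b)` and `(a₂, a₁)`, so
`σ_L` alone suffices.

Conversely, a single continuous `σ` generating the topology has no `<_σ`-cycle `x < y < z < x`
with `x`, `y` in one connected component: the open sets `(x, z)_σ` and `(←, x)_σ ∪ (z, →)_σ`
would disconnect it. With at most two components every triple has such a pair, so `≤_σ` is a
linear order, and its order topology is `T_σ`.
-/

open Set TopologicalSpace

open scoped Cardinal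

theorem eq_or_eq_or_eq_of_mk_le_two {α : Type*} (h : #α ≤ 2) (a b c : α) :
    a = b ∨ a = c ∨ b = c := by
  by_contra! hne
  have hinj : Function.Injective ![a, b, c] := by
    intro i j
    fin_cases i <;> fin_cases j <;> simp [hne.1, hne.2.1, hne.2.2, hne.1.symm, hne.2.1.symm,
      hne.2.2.symm]
  have := (Cardinal.lift_mk_le_lift_mk_of_injective hinj).trans (Cardinal.lift_le.2 h)
  norm_num at this

namespace WeakSelection

variable {X Y : Type*}

theorem le_refl (σ : WeakSelection X) (x : X) : σ.le x x := (σ.mem_pair x x).elim id id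

theorem le_total (σ : WeakSelection X) (x y : X) : σ.le x y ∨ σ.le y x :=
  (σ.mem_pair x y).imp id fun h => (σ.comm y x).trans h

theorem eq_of_le_of_le {σ : WeakSelection X} {x y : X} (h : σ.le x y) (h' : σ.le y x) :
    x = y :=
  h.symm.trans ((σ.comm x y).trans h')

theorem lt_asymm {σ : WeakSelection X} {x y : X} (h : σ.lt x y) (h' : σ.lt y x) : False :=
  h.2 (eq_of_le_of_le h.1 h'.1)

theorem lt_or_lt_of_ne (σ : WeakSelection X) {x y : X} (h : x ≠ y) : σ.lt x y ∨ σ.lt y x :=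
  (σ.le_total x y).imp (⟨·, h⟩) (⟨·, h.symm⟩)

open Classical in
noncomputable def ofRel (r : X → X → Prop) (total : ∀ x y, r x y ∨ r y x)
    (antisymm : ∀ x y, r x y → r y x → x = y) : WeakSelection X where
  toFun x y := if r x y then x else y
  mem_pair x y := by by_cases h : r x y <;> simp [h]
  comm x y := by
    by_cases h : r x y <;> by_cases h' : r y x <;> simp [h, h']
    · exact antisymm x y h h'
    · exact (h' ((total x y).resolve_left h)).elim

theorem lt_ofRel_iff {r : X → X → Prop} {total antisymm} {x y : X} :
    (ofRel r total antisymm).lt x y ↔ r x y ∧ x ≠ y := by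
  classical
  by_cases h : r x y <;> simp [lt, le, ofRel, h]
  exact Eq.symm

noncomputable def ofLinearOrder [LinearOrder X] : WeakSelection X :=
  ofRel (· ≤ ·) _root_.le_total fun _ _ => le_antisymm

@[simp]
theorem lt_ofLinearOrder_iff [LinearOrder X] {x y : X} : ofLinearOrder.lt x y ↔ x < y := by
  rw [ofLinearOrder, lt_ofRel_iff, lt_iff_le_and_ne]

@[reducible]
noncomputable def toLinearOrder (σ : WeakSelection X)
    (trans : ∀ x y z, σ.le x y → σ.le y z → σ.le x z) : LinearOrder X where
  le := σ.le
  lt := σ.lt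
  le_refl := σ.le_refl
  le_trans := trans
  le_antisymm _ _ := eq_of_le_of_le
  le_total := σ.le_total
  lt_iff_le_not_ge x _ := ⟨fun h => ⟨h.1, fun h' => h.2 (eq_of_le_of_le h.1 h')⟩,
    fun h => ⟨h.1, fun e => h.2 (e ▸ σ.le_refl x)⟩⟩
  toDecidableLE := Classical.decRel _

def comap (σ : WeakSelection Y) (e : X ≃ Y) : WeakSelection X where
  toFun x x' := e.symm (σ.toFun (e x) (e x'))
  mem_pair x x' := by rcases σ.mem_pair (e x) (e x') with h | h <;> simp [h]
  comm x x' := by rw [σ.comm]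

@[simp]
theorem lt_comap_iff {σ : WeakSelection Y} {e : X ≃ Y} {x x' : X} :
    (σ.comap e).lt x x' ↔ σ.lt (e x) (e x') := by
  simp [lt, le, comap, Equiv.symm_apply_eq]

theorem selTop_comap (σ : WeakSelection X) (e : Y ≃ X) :
    (σ.comap e).selTop = σ.selTop.induced e := by
  rw [selTop, selTop, induced_generateFrom_eq]
  congr 1
  ext s
  constructor
  · rintro ⟨a, rfl | rfl⟩
    exacts [⟨_, ⟨e a, Or.inl rfl⟩, by ext; simp⟩, ⟨_, ⟨e a, Or.inr rfl⟩, by ext; simp⟩]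
  · rintro ⟨_, ⟨a, rfl | rfl⟩, rfl⟩
    exacts [⟨e.symm a, Or.inl (by ext; simp)⟩, ⟨e.symm a, Or.inr (by ext; simp)⟩]

variable [TopologicalSpace X] [TopologicalSpace Y] {σ : WeakSelection X}

theorem Continuous.isOpen_gt' (hσ : σ.Continuous) (a : X) : IsOpen {y | σ.lt y a} :=
  isOpen_iff_forall_mem_open.2 fun y hy =>
    let ⟨U, _, hU, _, hyU, haV, h⟩ := hσ y a hy
    ⟨U, fun s hs => h s hs a haV, hU, hyU⟩

theorem Continuous.isOpen_lt' (hσ : σ.Continuous) (a : X) : IsOpen {y | σ.lt a y} :=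
  isOpen_iff_forall_mem_open.2 fun y hy =>
    let ⟨_, V, _, hV, haU, hyV, h⟩ := hσ a y hy
    ⟨V, fun s hs => h a haU s hs, hV, hyV⟩

theorem Continuous.le_selTop (hσ : σ.Continuous) : ‹TopologicalSpace X› ≤ σ.selTop :=
  le_generateFrom <| by rintro s ⟨a, rfl | rfl⟩; exacts [hσ.isOpen_gt' a, hσ.isOpen_lt' a]

theorem Continuous.comap (hσ : σ.Continuous) (e : Y ≃ₜ X) :
    (σ.comap e.toEquiv).Continuous := by
  intro x x' h
  obtain ⟨U, V, hU, hV, hxU, hxV, hUV⟩ := hσ _ _ (lt_comap_iff.1 h)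
  exact ⟨e ⁻¹' U, e ⁻¹' V, hU.preimage e.continuous, hV.preimage e.continuous, hxU, hxV,
    fun s hs t ht => lt_comap_iff.2 (hUV _ hs _ ht)⟩

theorem Continuous.not_lt_cycle (hσ : σ.Continuous) {x y z : X}
    (hxy : connectedComponent x = connectedComponent y)
    (h₁ : σ.lt x y) (h₂ : σ.lt y z) (h₃ : σ.lt z x) : False := by
  have hcover :
      univ ⊆ ({w | σ.lt x w} ∩ {w | σ.lt w z}) ∪ ({w | σ.lt w x} ∪ {w | σ.lt z w}) := by
    intro w _
    rcases eq_or_ne w x with rfl | hwx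
    · exact Or.inr (Or.inr h₃)
    rcases eq_or_ne w z with rfl | hwz
    · exact Or.inr (Or.inl h₃)
    rcases σ.lt_or_lt_of_ne hwx with h | h
    · exact Or.inr (Or.inl h)
    rcases σ.lt_or_lt_of_ne hwz with h' | h'
    · exact Or.inl ⟨h, h'⟩
    · exact Or.inr (Or.inr h')
  obtain ⟨w, -, ⟨hxw, hwz⟩, hwx | hzw⟩ := isPreconnected_connectedComponent _ _
    ((hσ.isOpen_lt' x).inter (hσ.isOpen_gt' z)) ((hσ.isOpen_gt' x).union (hσ.isOpen_lt' z))
    ((subset_univ _).trans hcover) ⟨y, hxy ▸ mem_connectedComponent, h₁, h₂⟩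
    ⟨x, mem_connectedComponent, Or.inr h₃⟩
  exacts [lt_asymm hxw hwx, lt_asymm hwz hzw]

end WeakSelection

section SupSelTop

universe u

variable {X Y : Type u} {Sig : Set (WeakSelection X)} {σ σ' : WeakSelection X}

theorem supSelTop_eq_iInf (Sig : Set (WeakSelection X)) :
    supSelTop Sig = ⨅ σ ∈ Sig, σ.selTop := by
  rw [supSelTop, biUnion_eq_iUnion, generateFrom_iUnion_isOpen, iInf_subtype']

theorem supSelTop_image_comap (Sig : Set (WeakSelection X)) (e : Y ≃ X) :
    supSelTop ((·.comap e) '' Sig) = (supSelTop Sig).induced e := by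
  simp only [supSelTop_eq_iInf, iInf_image, WeakSelection.selTop_comap, induced_iInf]

theorem isOpen_supSelTop_lt' (hσ : σ ∈ Sig) (a : X) : IsOpen[supSelTop Sig] {y | σ.lt a y} :=
  GenerateOpen.basic _ (mem_biUnion hσ (GenerateOpen.basic _ ⟨a, Or.inr rfl⟩))

theorem isOpen_supSelTop_gt' (hσ : σ ∈ Sig) (a : X) : IsOpen[supSelTop Sig] {y | σ.lt y a} :=
  GenerateOpen.basic _ (mem_biUnion hσ (GenerateOpen.basic _ ⟨a, Or.inl rfl⟩))

theorem isOpen_supSelTop_Ioo (hσ : σ ∈ Sig) (hσ' : σ' ∈ Sig) (a b : X) :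
    IsOpen[supSelTop Sig] ({y | σ.lt a y} ∩ {y | σ'.lt y b}) :=
  (supSelTop Sig).isOpen_inter _ _ (isOpen_supSelTop_lt' hσ a) (isOpen_supSelTop_gt' hσ' b)

variable [TopologicalSpace X] [TopologicalSpace Y]

theorem le_supSelTop (h : ∀ σ ∈ Sig, σ.Continuous) : ‹TopologicalSpace X› ≤ supSelTop Sig := by
  rw [supSelTop_eq_iInf]
  exact le_iInf₂ fun σ hσ => (h σ hσ).le_selTop

variable (Sig) in
def GeneratesTopology : Prop :=
  (∀ σ ∈ Sig, σ.Continuous) ∧ supSelTop Sig = ‹TopologicalSpace X›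

theorem cws_le_mk (h : GeneratesTopology Sig) : cws X ≤ #Sig :=
  csInf_le' ⟨Sig, h.1, h.2, rfl⟩

theorem GeneratesTopology.comap (h : GeneratesTopology Sig) (e : Y ≃ₜ X) :
    GeneratesTopology ((·.comap e.toEquiv) '' Sig) :=
  ⟨forall_mem_image.2 fun σ hσ => (h.1 σ hσ).comap e, by
    rw [supSelTop_image_comap, h.2]; exact e.isInducing.eq_induced.symm⟩

theorem cws_le_mk_of_homeomorph (h : GeneratesTopology Sig) (e : Y ≃ₜ X) : cws Y ≤ #Sig :=
  (cws_le_mk (h.comap e)).trans Cardinal.mk_image_le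

end SupSelTop

section Orderable

variable {X : Type*} [t : TopologicalSpace X]

theorem IsOrderableTop.exists_orderTopology (h : IsOrderableTop X) :
    ∃ l : LinearOrder X, @OrderTopology X t l.toPreorder := by
  obtain ⟨l, hl⟩ := h
  refine ⟨l, ⟨?_⟩⟩
  rw [hl]
  congr 1
  ext s
  exact exists_congr fun _ => or_comm

open Classical in
theorem isOrderableTop_of_subsingleton [Subsingleton X] : IsOrderableTop X :=
  ⟨linearOrderOfSTO WellOrderingRel,
    (IndiscreteTopology.eq_top X).trans (@IndiscreteTopology.eq_top X (generateFrom _) _).symm⟩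

open WeakSelection in
theorem generatesTopology_ofLinearOrder [LinearOrder X] [OrderTopology X] :
    GeneratesTopology {(ofLinearOrder : WeakSelection X)} := by
  refine ⟨?_, ?_⟩
  · rintro σ rfl x y h
    obtain ⟨U, V, hU, hV, hxU, hyV, hUV⟩ := order_separated (lt_ofLinearOrder_iff.1 h)
    exact ⟨U, V, hU, hV, hxU, hyV, fun s hs t ht => lt_ofLinearOrder_iff.2 (hUV s hs t ht)⟩
  · rw [supSelTop_eq_iInf, iInf_singleton, OrderTopology.topology_eq_generate_intervals (α := X)]
    simp only [selTop, lt_ofLinearOrder_iff]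
    congr 1
    ext s
    exact exists_congr fun _ => or_comm

theorem cws_le_one_of_isOrderableTop (h : IsOrderableTop X) : cws X ≤ 1 := by
  obtain ⟨l, _⟩ := h.exists_orderTopology
  exact (cws_le_mk generatesTopology_ofLinearOrder).trans (Cardinal.mk_singleton _).le

theorem isOrderableTop_of_selTop_eq {σ : WeakSelection X} (hσ : σ.Continuous)
    (h : σ.selTop = t) (hcc : #(ConnectedComponents X) ≤ 2) : IsOrderableTop X := by
  have hacyclic : ∀ x y z, σ.lt x y → σ.lt y z → σ.lt z x → False := by
    intro x y z h₁ h₂ h₃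
    rcases eq_or_eq_or_eq_of_mk_le_two hcc x y z with hxy | hxz | hyz
    · exact hσ.not_lt_cycle (ConnectedComponents.coe_eq_coe.1 hxy) h₁ h₂ h₃
    · exact hσ.not_lt_cycle (ConnectedComponents.coe_eq_coe.1 hxz).symm h₃ h₁ h₂
    · exact hσ.not_lt_cycle (ConnectedComponents.coe_eq_coe.1 hyz) h₂ h₃ h₁
  refine ⟨σ.toLinearOrder fun x y z hxy hyz => ?_, h.symm⟩
  by_contra hxz
  rcases eq_or_ne x y with rfl | hne
  · exact hxz hyz
  rcases eq_or_ne y z with rfl | hne'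
  · exact hxz hxy
  exact hacyclic x y z ⟨hxy, hne⟩ ⟨hyz, hne'⟩
    ⟨(σ.le_total x z).resolve_left hxz, fun e => hxz (e ▸ σ.le_refl z)⟩

theorem isOrderableTop_of_generatesTopology [T2Space X] {Sig : Set (WeakSelection X)}
    (h : GeneratesTopology Sig) (hSig : Sig.Subsingleton) (hcc : #(ConnectedComponents X) ≤ 2) :
    IsOrderableTop X := by
  rcases hSig.eq_empty_or_singleton with rfl | ⟨σ, rfl⟩
  · have : IndiscreteTopology X := ⟨by rw [← h.2, supSelTop_eq_iInf]; simp⟩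
    have : Subsingleton X :=
      ⟨fun x y => (inseparable_def.2 (by simp [IndiscreteTopology.nhds_eq])).eq⟩
    exact isOrderableTop_of_subsingleton
  · refine isOrderableTop_of_selTop_eq (h.1 σ rfl) ?_ hcc
    rw [← h.2, supSelTop_eq_iInf, iInf_singleton]

theorem two_le_cws [T2Space X] (hord : ¬ IsOrderableTop X) (hcc : #(ConnectedComponents X) ≤ 2)
    {Sig₀ : Set (WeakSelection X)} (hSig₀ : GeneratesTopology Sig₀) : 2 ≤ cws X := by
  -- `le_csInf` needs a witness: `sInf ∅ = 0` in `Cardinal`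
  refine le_csInf ⟨_, Sig₀, hSig₀.1, hSig₀.2, rfl⟩ ?_
  rintro _ ⟨Sig, hcont, hsup, rfl⟩
  by_contra hlt
  refine hord (isOrderableTop_of_generatesTopology ⟨hcont, hsup⟩ (fun σ hσ τ hτ => ?_) hcc)
  by_contra hne
  exact hlt (Cardinal.two_le_iff.2 ⟨⟨σ, hσ⟩, ⟨τ, hτ⟩, fun h => hne (congrArg Subtype.val h)⟩)

end Orderable

theorem isOpen_image_of_induced_le {α Z : Type*} [TopologicalSpace α] {τ : TopologicalSpace Z}
    {f : α → Z} (h : τ.induced f ≤ ‹_›) (hf : IsOpen[τ] (range f)) {U : Set α} (hU : IsOpen U) :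
    IsOpen[τ] (f '' U) := by
  obtain ⟨V, hV, rfl⟩ := TopologicalSpace.le_def.1 h U hU
  rw [image_preimage_eq_inter_range]
  exact τ.isOpen_inter _ _ hV hf

section LinearOrder

variable {α : Type*} [LinearOrder α] [TopologicalSpace α] [OrderTopology α]

theorem IsClopen.exists_isClopen_Iic_subset_subset_Iio {U : Set α} (hU : IsClopen U) {u v : α}
    (hu : u ∈ U) (hv : v ∉ U) (huv : u < v) :
    ∃ L : Set α, IsClopen L ∧ Iic u ⊆ L ∧ L ⊆ Iio v := by
  have hclosed : Iio u ∪ (U ∩ Iio v) = Iic u ∪ (U ∩ Iic v) := by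
    ext x
    simp only [mem_union, mem_inter_iff, mem_Iio, mem_Iic]
    constructor
    · rintro (h | ⟨hx, h⟩)
      exacts [Or.inl h.le, Or.inr ⟨hx, h.le⟩]
    · rintro (h | ⟨hx, h⟩)
      · rcases h.lt_or_eq with h | rfl
        exacts [Or.inl h, Or.inr ⟨hu, huv⟩]
      · exact Or.inr ⟨hx, h.lt_of_ne (ne_of_mem_of_not_mem hx hv)⟩
  refine ⟨Iio u ∪ (U ∩ Iio v), ⟨?_, isOpen_Iio.union (hU.isOpen.inter isOpen_Iio)⟩,
    fun x hx => ?_, union_subset (Iio_subset_Iio huv.le) inter_subset_right⟩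
  · rw [hclosed]
    exact isClosed_Iic.union (hU.isClosed.inter isClosed_Iic)
  · rw [hclosed]
    exact Or.inl hx

theorem exists_isClopen_Iic_subset_subset_Iio (h : ¬ PreconnectedSpace α) :
    ∃ a₁ a₂ : α, ∃ L : Set α, IsClopen L ∧ Iic a₁ ⊆ L ∧ L ⊆ Iio a₂ := by
  simp only [preconnectedSpace_iff_clopen, not_forall, not_or, ← ne_eq,
    ← nonempty_iff_ne_empty, ← nonempty_compl] at h
  obtain ⟨U, hU, ⟨u, hu⟩, ⟨v, hv⟩⟩ := h
  rcases lt_or_gt_of_ne (ne_of_mem_of_not_mem hu hv) with huv | hvu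
  · exact ⟨u, v, hU.exists_isClopen_Iic_subset_subset_Iio hu hv huv⟩
  · exact ⟨v, u, hU.compl.exists_isClopen_Iic_subset_subset_Iio hv (not_not.2 hu) hvu⟩

theorem induced_supSelTop_le_of_lt_iff {Z : Type*} {Sig : Set (WeakSelection Z)}
    {σ : WeakSelection Z} (hσ : σ ∈ Sig) {f : α → Z} (hf : ∀ a a', σ.lt (f a) (f a') ↔ a < a') :
    (supSelTop Sig).induced f ≤ ‹_› := by
  rw [OrderTopology.topology_eq_generate_intervals (α := α)]
  refine le_generateFrom ?_
  rintro s ⟨a, rfl | rfl⟩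
  · exact ⟨_, isOpen_supSelTop_lt' hσ (f a), by ext; simp [hf]⟩
  · exact ⟨_, isOpen_supSelTop_gt' hσ (f a), by ext; simp [hf]⟩

end LinearOrder

section Sum

open Sum

variable {α β : Type*} [LinearOrder α] [LinearOrder β]

def sumRel (L : Set α) : α ⊕ β → α ⊕ β → Prop
  | inl a, inl a' => a ≤ a'
  | inr b, inr b' => b ≤ b'
  | inl a, inr _ => a ∉ L
  | inr _, inl a => a ∈ L

noncomputable def sumSel (L : Set α) : WeakSelection (α ⊕ β) :=
  .ofRel (sumRel L) (by rintro (a | b) (a' | b') <;> simp [sumRel, le_total, em, em'])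
    (by rintro (a | b) (a' | b') <;> simp +contextual [sumRel, le_antisymm_iff])

variable {L : Set α} {a a' : α} {b b' : β}

@[simp]
theorem sumSel_lt_inl_inl : (sumSel L : WeakSelection (α ⊕ β)).lt (inl a) (inl a') ↔ a < a' := by
  simp [sumSel, WeakSelection.lt_ofRel_iff, sumRel, lt_iff_le_and_ne]

@[simp]
theorem sumSel_lt_inr_inr : (sumSel L : WeakSelection (α ⊕ β)).lt (inr b) (inr b') ↔ b < b' := by
  simp [sumSel, WeakSelection.lt_ofRel_iff, sumRel, lt_iff_le_and_ne]

@[simp]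
theorem sumSel_lt_inl_inr : (sumSel L : WeakSelection (α ⊕ β)).lt (inl a) (inr b) ↔ a ∉ L := by
  simp [sumSel, WeakSelection.lt_ofRel_iff, sumRel]

@[simp]
theorem sumSel_lt_inr_inl : (sumSel L : WeakSelection (α ⊕ β)).lt (inr b) (inl a) ↔ a ∈ L := by
  simp [sumSel, WeakSelection.lt_ofRel_iff, sumRel]

variable [TopologicalSpace α] [OrderTopology α] [TopologicalSpace β] [OrderTopology β]

theorem sumSel_continuous (hL : IsClopen L) : (sumSel L : WeakSelection (α ⊕ β)).Continuous := by
  rintro (a | b) (a' | b') h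
  · obtain ⟨U, V, hU, hV, haU, haV, hUV⟩ := order_separated (sumSel_lt_inl_inl.1 h)
    refine ⟨inl '' U, inl '' V, isOpenMap_inl U hU, isOpenMap_inl V hV, mem_image_of_mem _ haU,
      mem_image_of_mem _ haV, ?_⟩
    rintro _ ⟨s, hs, rfl⟩ _ ⟨t, ht, rfl⟩
    exact sumSel_lt_inl_inl.2 (hUV s hs t ht)
  · refine ⟨inl '' Lᶜ, range inr, isOpenMap_inl _ hL.isClosed.isOpen_compl, isOpen_range_inr,
      mem_image_of_mem _ (sumSel_lt_inl_inr.1 h), mem_range_self _, ?_⟩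
    rintro _ ⟨s, hs, rfl⟩ _ ⟨t, rfl⟩
    exact sumSel_lt_inl_inr.2 hs
  · refine ⟨range inr, inl '' L, isOpen_range_inr, isOpenMap_inl _ hL.isOpen, mem_range_self _,
      mem_image_of_mem _ (sumSel_lt_inr_inl.1 h), ?_⟩
    rintro _ ⟨s, rfl⟩ _ ⟨t, ht, rfl⟩
    exact sumSel_lt_inr_inl.2 ht
  · obtain ⟨U, V, hU, hV, hbU, hbV, hUV⟩ := order_separated (sumSel_lt_inr_inr.1 h)
    refine ⟨inr '' U, inr '' V, isOpenMap_inr U hU, isOpenMap_inr V hV, mem_image_of_mem _ hbU,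
      mem_image_of_mem _ hbV, ?_⟩
    rintro _ ⟨s, hs, rfl⟩ _ ⟨t, ht, rfl⟩
    exact sumSel_lt_inr_inr.2 (hUV s hs t ht)

theorem generatesTopology_of_isOpen_range {Sig : Set (WeakSelection (α ⊕ β))}
    (hcont : ∀ σ ∈ Sig, σ.Continuous) (hL : sumSel L ∈ Sig)
    (hinl : Nonempty β → IsOpen[supSelTop Sig] (range inl))
    (hinr : Nonempty α → IsOpen[supSelTop Sig] (range inr)) : GeneratesTopology Sig := by
  replace hinl : IsOpen[supSelTop Sig] (range inl) := by
    rcases isEmpty_or_nonempty β with hβ | hβ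
    · rw [range_eq_univ.2 fun | inl a => ⟨a, rfl⟩ | inr b => isEmptyElim b]
      exact (supSelTop Sig).isOpen_univ
    · exact hinl hβ
  replace hinr : IsOpen[supSelTop Sig] (range inr) := by
    rcases isEmpty_or_nonempty α with hα | hα
    · rw [range_eq_univ.2 fun | inl a => isEmptyElim a | inr b => ⟨b, rfl⟩]
      exact (supSelTop Sig).isOpen_univ
    · exact hinr hα
  refine ⟨hcont, le_antisymm (TopologicalSpace.le_def.2 fun s hs => ?_) (le_supSelTop hcont)⟩
  rw [← image_preimage_inl_union_image_preimage_inr s]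
  exact @IsOpen.union _ _ _ (supSelTop Sig)
    (isOpen_image_of_induced_le (induced_supSelTop_le_of_lt_iff hL fun _ _ => sumSel_lt_inl_inl)
      hinl (isOpen_sum_iff.1 hs).1)
    (isOpen_image_of_induced_le (induced_supSelTop_le_of_lt_iff hL fun _ _ => sumSel_lt_inr_inr)
      hinr (isOpen_sum_iff.1 hs).2)

theorem exists_generatesTopology_mk_le_two :
    ∃ Sig : Set (WeakSelection (α ⊕ β)), GeneratesTopology Sig ∧ #Sig ≤ 2 := by
  set σ₀ : WeakSelection (α ⊕ β) := sumSel ∅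
  set σ₁ : WeakSelection (α ⊕ β) := sumSel univ
  have hcont : ∀ σ ∈ ({σ₀, σ₁} : Set _), σ.Continuous := by
    rintro σ (rfl | rfl)
    exacts [sumSel_continuous isClopen_empty, sumSel_continuous isClopen_univ]
  have h₀ : σ₀ ∈ ({σ₀, σ₁} : Set _) := mem_insert _ _
  have h₁ : σ₁ ∈ ({σ₀, σ₁} : Set _) := mem_insert_of_mem _ rfl
  refine ⟨{σ₀, σ₁}, generatesTopology_of_isOpen_range hcont h₀ ?_ ?_, ?_⟩
  · rintro ⟨b⟩
    convert isOpen_supSelTop_Ioo h₁ h₀ (inr b) (inr b)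
    ext (a | b') <;> simp [σ₀, σ₁]
    exact le_of_lt
  · rintro ⟨a⟩
    convert isOpen_supSelTop_Ioo h₀ h₁ (inl a) (inl a)
    ext (a' | b) <;> simp [σ₀, σ₁]
    exact le_of_lt
  · exact Cardinal.mk_insert_le.trans (by rw [Cardinal.mk_singleton, one_add_one_eq_two])

theorem exists_generatesTopology_singleton_of_isClopen {a₁ a₂ : α} (hL : IsClopen L)
    (h₁ : Iic a₁ ⊆ L) (h₂ : L ⊆ Iio a₂) : ∃ σ : WeakSelection (α ⊕ β), GeneratesTopology {σ} := by
  have ha₁ : a₁ ∈ L := h₁ le_rfl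
  have ha₂ : a₂ ∉ L := fun h => lt_irrefl a₂ (h₂ h)
  have hσ : (sumSel L : WeakSelection (α ⊕ β)) ∈ {sumSel L} := mem_singleton _
  refine ⟨sumSel L, generatesTopology_of_isOpen_range (by simpa using sumSel_continuous hL) hσ
    (fun ⟨b⟩ => ?_) (fun _ => ?_)⟩
  · have : range inl = {y | (sumSel L).lt (inr b) y} ∩ {y | (sumSel L).lt y (inl a₂)} ∪
        {y | (sumSel L).lt (inl a₁) y} ∩ {y | (sumSel L).lt y (inr b)} := by
      ext (a | b') <;> simp [ha₁, ha₂]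
      by_cases ha : a ∈ L
      · simpa [ha] using h₂ ha
      · simpa [ha] using lt_of_not_ge fun h => ha (h₁ h)
    rw [this]
    exact @IsOpen.union _ _ _ (supSelTop _) (isOpen_supSelTop_Ioo hσ hσ _ _)
      (isOpen_supSelTop_Ioo hσ hσ _ _)
  · convert isOpen_supSelTop_Ioo hσ hσ (inl a₂) (inl a₁)
    ext (a | b) <;> simp [ha₁, ha₂]
    exact fun h => ((h₂ ha₁).trans h).le

end Sum

section SemiOrderable

universe u

variable {X : Type*} [TopologicalSpace X]

open Classical in
noncomputable def IsClopen.homeomorphSumCompl {A : Set X} (hA : IsClopen A) : A ⊕ ↥Aᶜ ≃ₜ X :=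
  (Equiv.Set.sumCompl A).toHomeomorphOfContinuousOpen
    (continuous_sum_dom.2 ⟨by simpa [Function.comp_def] using continuous_subtype_val,
      by simpa [Function.comp_def] using continuous_subtype_val⟩)
    (isOpenMap_sum.2 ⟨by simpa using hA.isOpen.isOpenMap_subtype_val,
      by simpa using hA.isClosed.isOpen_compl.isOpenMap_subtype_val⟩)

theorem mk_connectedComponents_le_two {A : Set X} (h₁ : IsPreconnected A)
    (h₂ : IsPreconnected Aᶜ) : #(ConnectedComponents X) ≤ 2 := by
  have hsub : ∀ {S : Set X}, IsPreconnected S →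
      ((↑) '' S : Set (ConnectedComponents X)).Subsingleton := by
    rintro S hS _ ⟨x, hx, rfl⟩ _ ⟨y, hy, rfl⟩
    exact ConnectedComponents.coe_eq_coe.2
      (connectedComponent_eq (hS.subset_connectedComponent hx hy))
  calc #(ConnectedComponents X)
      = #((↑) '' A ∪ (↑) '' Aᶜ : Set (ConnectedComponents X)) := by
        rw [← image_union, union_compl_self,
          image_univ_of_surjective ConnectedComponents.surjective_coe, Cardinal.mk_univ]
    _ ≤ 1 + 1 := (Cardinal.mk_union_le _ _).trans (add_le_add
        (Cardinal.mk_le_one_iff_set_subsingleton.2 (hsub h₁))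
        (Cardinal.mk_le_one_iff_set_subsingleton.2 (hsub h₂)))
    _ = 2 := one_add_one_eq_two

theorem cws_le_one_of_homeomorph_sum {Y α β : Type u} [TopologicalSpace Y] [LinearOrder α]
    [TopologicalSpace α] [OrderTopology α] [LinearOrder β] [TopologicalSpace β] [OrderTopology β]
    (e : Y ≃ₜ α ⊕ β) (h : ¬ PreconnectedSpace α) : cws Y ≤ 1 := by
  obtain ⟨a₁, a₂, L, hL, h₁, h₂⟩ := exists_isClopen_Iic_subset_subset_Iio h
  obtain ⟨σ, hσ⟩ := exists_generatesTopology_singleton_of_isClopen (β := β) hL h₁ h₂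
  exact (cws_le_mk_of_homeomorph hσ e).trans (Cardinal.mk_singleton σ).le

end SemiOrderable

/-- If `X` is a semi-orderable Hausdorff space, then `cws X ≤ 2`; moreover
`cws X = 2` iff `X` is not orderable and has at most two connected components. -/
theorem stmt0 {X : Type*} [t : TopologicalSpace X] [T2Space X]
    (hX : SemiOrderable X) :
    cws X ≤ 2 ∧
      (cws X = 2 ↔ ¬ IsOrderableTop X ∧ Cardinal.mk (ConnectedComponents X) ≤ 2) := by
  obtain ⟨A, hA, hOA, hOB⟩ := hX
  obtain ⟨lA, _⟩ := hOA.exists_orderTopology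
  obtain ⟨lB, _⟩ := hOB.exists_orderTopology
  let e := hA.homeomorphSumCompl.symm
  obtain ⟨Sig, hSig, hcard⟩ := exists_generatesTopology_mk_le_two (α := A) (β := ↥Aᶜ)
  have hle_two : cws X ≤ 2 := (cws_le_mk_of_homeomorph hSig e).trans hcard
  have hle_one : IsOrderableTop X ∨ ¬ #(ConnectedComponents X) ≤ 2 → cws X ≤ 1 := by
    rintro (hord | hcc)
    · exact cws_le_one_of_isOrderableTop hord
    have hsplit : ¬ (IsPreconnected A ∧ IsPreconnected Aᶜ) :=
      fun h => hcc (mk_connectedComponents_le_two h.1 h.2)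
    rw [not_and_or, isPreconnected_iff_preconnectedSpace,
      isPreconnected_iff_preconnectedSpace] at hsplit
    rcases hsplit with h | h
    · exact cws_le_one_of_homeomorph_sum e h
    · exact cws_le_one_of_homeomorph_sum (e.trans (Homeomorph.sumComm _ _)) h
  refine ⟨hle_two, fun h => ?_, fun h => le_antisymm hle_two (two_le_cws h.1 h.2 (hSig.comap e))⟩
  by_contra hcon
  rw [not_and_or, not_not] at hcon
  exact absurd (h ▸ hle_one hcon) (by norm_num)
end

section
/- If P is a partition of a set X with |P| ≠ 2, then there is a weak selection σ for P such that for every choice of weak selections h_P for each P ∈ P, every member of P is open in the selection topology T_{σ*h} on X. Moreover, if X is a Hausdorff space, P is an open partition of X, and each weak selection h_P is continuous, then σ*h is a continuous weak selection for X. -/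
open Topology

/-- `A <_g B` for subsets: `a <_g b` for all `a ∈ A`, `b ∈ B`. -/
def setLT {X : Type*} (g : WeakSelection X) (A B : Set X) : Prop :=
  ∀ a ∈ A, ∀ b ∈ B, g.lt a b

/-- `g` is the `P`-invariant weak selection `σ * h` determined by a weak
selection `σ` for the partition `P` (with block map `blk`) and weak selections
`h p` for each block `p ∈ P`: on points of distinct blocks `g` is governed by
`σ`, and within a block `p` it agrees with `h p`. -/
def IsStar {X : Type*} (P : Set (Set X)) (blk : X → Set X) (hblk : ∀ x, blk x ∈ P)
    (σ : WeakSelection ↥P) (h : ∀ p : ↥P, WeakSelection ↥(p : Set X))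
    (g : WeakSelection X) : Prop :=
  (∀ x y : X, blk x ≠ blk y →
      (g.lt x y ↔ σ.lt ⟨blk x, hblk x⟩ ⟨blk y, hblk y⟩)) ∧
  (∀ (p : ↥P) (x y : ↥(p : Set X)), blk ↑x = ↑p → blk ↑y = ↑p →
      g.toFun ↑x ↑y = ↑((h p).toFun x y))

/-! The selection `σ` comes from a tournament on `P` in which every block `p` is *cut out* by
finitely many others: finite sets `L` above `p` and `U` below `p` such that every other block lies
above a member of `L` or below a member of `U`. Choosing a point `a s` in each block `s`, the block
`p` is then the finite intersection of the `σ * h`-intervals `(←, a s)`, `s ∈ L`, and `(a s, →)`,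
`s ∈ U`; the excluding block must differ from the excluded one, since inside a block `σ * h` is
governed by the arbitrary `h`, and this is what fails for `|P| = 2`. The lexicographic product of
any tournament with the 3-cycle has such cuts, which covers every infinite `P` and every finite
`P` of size divisible by 3; the other finite sizes `≥ 3` are reached by adding a tournament on 4 or
5 vertices. For continuity, the open blocks separate points of different blocks, and inside a
block the neighbourhoods given by the continuity of `h` are open in `X`. -/

structure Tournament (α : Type*) where
  lt : α → α → Prop
  asymm : ∀ x y, lt x y → ¬ lt y x
  total : ∀ x y, x ≠ y → lt x y ∨ lt y x

namespace Tournament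

variable {α β : Type*}

@[simp]
theorem lt_irrefl (t : Tournament α) (x : α) : ¬ t.lt x x := fun h => t.asymm x x h h

theorem ne_of_lt (t : Tournament α) {x y : α} (h : t.lt x y) : x ≠ y := by
  rintro rfl; exact t.lt_irrefl x h

open scoped Classical in
noncomputable def toWeakSelection (t : Tournament α) : WeakSelection α where
  toFun x y := if t.lt x y then x else y
  mem_pair x y := by split_ifs <;> simp
  comm x y := by
    by_cases hxy : x = y
    · rw [hxy]
    rcases t.total x y hxy with h | h
    · simp [h, t.asymm _ _ h]
    · simp [h, t.asymm _ _ h]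

theorem toWeakSelection_lt_iff (t : Tournament α) {x y : α} :
    t.toWeakSelection.lt x y ↔ t.lt x y := by
  classical
  by_cases h : t.lt x y
  · simpa [h, WeakSelection.lt, WeakSelection.le, toWeakSelection] using t.ne_of_lt h
  · simp [h, WeakSelection.lt, WeakSelection.le, toWeakSelection, eq_comm]

def ofLT (α : Type*) [LinearOrder α] : Tournament α where
  lt := (· < ·)
  asymm _ _ := lt_asymm
  total _ _ := Ne.lt_or_gt

instance (α : Type*) : Nonempty (Tournament α) :=
  letI := IsWellOrder.linearOrder (WellOrderingRel (α := α))
  ⟨ofLT α⟩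

def map (e : α ≃ β) (t : Tournament α) : Tournament β where
  lt x y := t.lt (e.symm x) (e.symm y)
  asymm _ _ := t.asymm _ _
  total _ _ hxy := t.total _ _ (e.symm.injective.ne hxy)

@[simp]
theorem map_lt (e : α ≃ β) (t : Tournament α) (x y : β) :
    (t.map e).lt x y ↔ t.lt (e.symm x) (e.symm y) := Iff.rfl

def sumLex (t : Tournament α) (u : Tournament β) : Tournament (α ⊕ β) where
  lt := Sum.Lex t.lt u.lt
  asymm := by
    rintro (a | a) (b | b) h h' <;>
      simp only [Sum.lex_inl_inl, Sum.lex_inr_inr, Sum.lex_inr_inl] at h h'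
    exacts [t.asymm _ _ h h', u.asymm _ _ h h']
  total := by
    rintro (a | a) (b | b) hab <;> simp only [Sum.lex_inl_inl, Sum.lex_inr_inr, Sum.lex_inr_inl,
      Sum.Lex.sep, true_or, or_true]
    exacts [t.total a b (by simpa using hab), u.total a b (by simpa using hab)]

@[simp]
theorem sumLex_lt (t : Tournament α) (u : Tournament β) (x y : α ⊕ β) :
    (t.sumLex u).lt x y ↔ Sum.Lex t.lt u.lt x y := Iff.rfl

def prodLex (t : Tournament α) (u : Tournament β) : Tournament (α × β) where
  lt := Prod.Lex t.lt u.lt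
  asymm := by
    rintro ⟨a, i⟩ ⟨b, j⟩ h h'
    rw [Prod.lex_def] at h h'
    rcases h with h | ⟨rfl, h⟩
    · rcases h' with h' | ⟨rfl, -⟩
      exacts [t.asymm _ _ h h', t.ne_of_lt h rfl]
    · rcases h' with h' | ⟨-, h'⟩
      exacts [t.ne_of_lt h' rfl, u.asymm _ _ h h']
  total := by
    rintro ⟨a, i⟩ ⟨b, j⟩ hne
    simp only [Prod.lex_def]
    by_cases hab : a = b
    · subst hab
      have hij : i ≠ j := fun h => hne (by rw [h])
      rcases u.total i j hij with h | h <;> simp [h]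
    · rcases t.total a b hab with h | h <;> simp [h]

@[simp]
theorem prodLex_lt (t : Tournament α) (u : Tournament β) (x y : α × β) :
    (t.prodLex u).lt x y ↔ Prod.Lex t.lt u.lt x y := Iff.rfl

def IsCut (t : Tournament α) (p : α) (L U : Finset α) : Prop :=
  (∀ s ∈ L, t.lt p s) ∧ (∀ s ∈ U, t.lt s p) ∧
    ∀ x, x ≠ p → (∃ s ∈ L, t.lt s x) ∨ ∃ s ∈ U, t.lt x s

instance [Fintype α] [DecidableEq α] (t : Tournament α) [DecidableRel t.lt] (p : α)
    (L U : Finset α) : Decidable (t.IsCut p L U) := by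
  unfold IsCut; infer_instance

def HasFiniteCuts (t : Tournament α) : Prop :=
  ∀ p, ∃ L U, t.IsCut p L U

theorem hasFiniteCuts_of_subsingleton [Subsingleton α] (t : Tournament α) : t.HasFiniteCuts :=
  fun p => ⟨∅, ∅, by simp, by simp, fun x hx => absurd (Subsingleton.elim x p) hx⟩

theorem IsCut.map {t : Tournament α} {p : α} {L U : Finset α} (h : t.IsCut p L U) (e : α ≃ β) :
    (t.map e).IsCut (e p) (L.map e.toEmbedding) (U.map e.toEmbedding) := by
  obtain ⟨hL, hU, hcut⟩ := h
  refine ⟨fun s hs => ?_, fun s hs => ?_, fun x hx => ?_⟩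
  · simpa using hL _ (Finset.mem_map_equiv.mp hs)
  · simpa using hU _ (Finset.mem_map_equiv.mp hs)
  · rcases hcut (e.symm x) (by simpa [Equiv.symm_apply_eq] using hx) with ⟨s, hs, h⟩ | ⟨s, hs, h⟩
    · exact Or.inl ⟨e s, Finset.mem_map_of_mem _ hs, by simpa using h⟩
    · exact Or.inr ⟨e s, Finset.mem_map_of_mem _ hs, by simpa using h⟩

theorem HasFiniteCuts.map {t : Tournament α} (h : t.HasFiniteCuts) (e : α ≃ β) :
    (t.map e).HasFiniteCuts := fun p => by
  obtain ⟨L, U, hcut⟩ := h (e.symm p)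
  exact ⟨_, _, by simpa using hcut.map e⟩

theorem IsCut.sumLex_inl {t : Tournament α} {a : α} {L U : Finset α} (h : t.IsCut a L U)
    (hL : L.Nonempty) (u : Tournament β) :
    (t.sumLex u).IsCut (.inl a) (L.map .inl) (U.map .inl) := by
  obtain ⟨hLa, hUa, hcut⟩ := h
  refine ⟨by simpa using hLa, by simpa using hUa, ?_⟩
  rintro (b | b) hb
  · simpa using hcut b (by simpa using hb)
  · obtain ⟨s, hs⟩ := hL
    exact Or.inl ⟨.inl s, Finset.mem_map_of_mem _ hs, Sum.Lex.sep _ _⟩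

theorem IsCut.sumLex_inr (t : Tournament α) {u : Tournament β} {b : β} {L U : Finset β}
    (h : u.IsCut b L U) (hU : U.Nonempty) :
    (t.sumLex u).IsCut (.inr b) (L.map .inr) (U.map .inr) := by
  obtain ⟨hLb, hUb, hcut⟩ := h
  refine ⟨by simpa using hLb, by simpa using hUb, ?_⟩
  rintro (a | a) ha
  · obtain ⟨s, hs⟩ := hU
    exact Or.inr ⟨.inr s, Finset.mem_map_of_mem _ hs, Sum.Lex.sep _ _⟩
  · simpa using hcut a (by simpa using ha)

theorem IsCut.prodLex (t : Tournament α) {u : Tournament β} {i : β} {L U : Finset β}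
    (h : u.IsCut i L U) (hL : L.Nonempty) (hU : U.Nonempty) (a : α) :
    (t.prodLex u).IsCut (a, i) (L.map (.sectR a β)) (U.map (.sectR a β)) := by
  obtain ⟨hLi, hUi, hcut⟩ := h
  refine ⟨by simpa [Prod.lex_def] using hLi, by simpa [Prod.lex_def] using hUi, ?_⟩
  rintro ⟨b, j⟩ hbj
  by_cases hba : b = a
  · subst hba
    simpa [Prod.lex_def] using hcut j (by simpa using hbj)
  · obtain ⟨l, hl⟩ := hL
    obtain ⟨v, hv⟩ := hU
    rcases t.total a b (Ne.symm hba) with hab | hba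
    · exact Or.inl ⟨(a, l), Finset.mem_map_of_mem (.sectR a β) hl, Prod.Lex.left _ _ hab⟩
    · exact Or.inr ⟨(a, v), Finset.mem_map_of_mem (.sectR a β) hv, Prod.Lex.left _ _ hba⟩

def threeCycle : Tournament (Fin 3) where
  lt i j := j = i + 1
  asymm := by decide
  total := by decide

instance : DecidableRel threeCycle.lt := fun _ _ => inferInstanceAs (Decidable (_ = _))

theorem threeCycle_isCut : ∀ i, threeCycle.IsCut i {i + 1} {i + 2} := by decide

def threeCycleWithTop : Tournament (Fin 4) where
  lt i j := i ≠ 0 ∧ (j = 0 ∨ j.val = i.val % 3 + 1)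
  asymm := by decide
  total := by decide

instance : DecidableRel threeCycleWithTop.lt := fun _ _ => inferInstanceAs (Decidable (_ ∧ _))

def rotationalFive : Tournament (Fin 5) where
  lt i j := j - i = 1 ∨ j - i = 2
  asymm := by decide
  total := by decide

instance : DecidableRel rotationalFive.lt := fun _ _ => inferInstanceAs (Decidable (_ ∨ _))

theorem threeCycleWithTop_isCut :
    ∀ p, ∃ L U, U.Nonempty ∧ threeCycleWithTop.IsCut p L U := by decide

theorem rotationalFive_isCut :
    ∀ p, ∃ L U, U.Nonempty ∧ rotationalFive.IsCut p L U := by decide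

theorem prodLex_threeCycle_isCut (t : Tournament α) (p : α × Fin 3) :
    ∃ L U, L.Nonempty ∧ U.Nonempty ∧ (t.prodLex threeCycle).IsCut p L U :=
  ⟨_, _, by simp, by simp, (threeCycle_isCut p.2).prodLex t (by simp) (by simp) p.1⟩

theorem hasFiniteCuts_prodLex_threeCycle (t : Tournament α) :
    (t.prodLex threeCycle).HasFiniteCuts := fun p =>
  let ⟨L, U, _, _, hcut⟩ := prodLex_threeCycle_isCut t p
  ⟨L, U, hcut⟩

theorem hasFiniteCuts_sumLex {t : Tournament α} {u : Tournament β}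
    (ht : ∀ a, ∃ L U, L.Nonempty ∧ t.IsCut a L U) (hu : ∀ b, ∃ L U, U.Nonempty ∧ u.IsCut b L U) :
    (t.sumLex u).HasFiniteCuts := by
  rintro (a | b)
  · obtain ⟨L, U, hL, hcut⟩ := ht a
    exact ⟨_, _, hcut.sumLex_inl hL u⟩
  · obtain ⟨L, U, hU, hcut⟩ := hu b
    exact ⟨_, _, hcut.sumLex_inr t hU⟩

theorem exists_hasFiniteCuts_fin {n : ℕ} (hn : 3 ≤ n) :
    ∃ t : Tournament (Fin n), t.HasFiniteCuts := by
  obtain ⟨k, m, hm, rfl⟩ : ∃ k m, (m = 0 ∨ m = 4 ∨ m = 5) ∧ k * 3 + m = n := by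
    rcases (by omega : n % 3 = 0 ∨ n % 3 = 1 ∨ n % 3 = 2) with h | h | h
    · exact ⟨n / 3, 0, by omega, by omega⟩
    · exact ⟨(n - 4) / 3, 4, by omega, by omega⟩
    · exact ⟨(n - 5) / 3, 5, by omega, by omega⟩
  obtain ⟨u, hu⟩ : ∃ u : Tournament (Fin m), ∀ p, ∃ L U, U.Nonempty ∧ u.IsCut p L U := by
    rcases hm with rfl | rfl | rfl
    exacts [⟨Classical.arbitrary _, fun p => p.elim0⟩, ⟨_, threeCycleWithTop_isCut⟩,
      ⟨_, rotationalFive_isCut⟩]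
  let e : (Fin k × Fin 3) ⊕ Fin m ≃ Fin (k * 3 + m) :=
    (finProdFinEquiv.sumCongr (Equiv.refl _)).trans finSumFinEquiv
  have ht (p) : ∃ L U, L.Nonempty ∧ ((ofLT (Fin k)).prodLex threeCycle).IsCut p L U := by
    obtain ⟨L, U, hL, -, hcut⟩ := prodLex_threeCycle_isCut _ p
    exact ⟨L, U, hL, hcut⟩
  exact ⟨_, (hasFiniteCuts_sumLex ht hu).map e⟩

theorem exists_hasFiniteCuts_of_infinite [Infinite α] : ∃ t : Tournament α, t.HasFiniteCuts := by
  have hα : Cardinal.aleph0 ≤ Cardinal.mk α := Cardinal.infinite_iff.mp ‹_›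
  obtain ⟨e⟩ : Nonempty (α × Fin 3 ≃ α) := Cardinal.eq.mp <| by
    rw [Cardinal.mk_prod, Cardinal.lift_uzero, Cardinal.mk_fin, Cardinal.lift_natCast]
    exact Cardinal.mul_eq_left hα ((Cardinal.natCast_lt_aleph0).le.trans hα) (by norm_num)
  exact ⟨_, (hasFiniteCuts_prodLex_threeCycle (Classical.arbitrary _)).map e⟩

theorem exists_hasFiniteCuts (h : Cardinal.mk α ≠ 2) : ∃ t : Tournament α, t.HasFiniteCuts := by
  rcases subsingleton_or_nontrivial α with hα | hα
  · exact ⟨Classical.arbitrary _, hasFiniteCuts_of_subsingleton _⟩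
  rcases finite_or_infinite α with hα' | hα'
  · have hcard : Nat.card α ≠ 2 := by
      rw [← Nat.cast_card] at h; exact_mod_cast h
    have hlt : 1 < Nat.card α := Finite.one_lt_card_iff_nontrivial.mpr hα
    obtain ⟨t, ht⟩ := exists_hasFiniteCuts_fin (n := Nat.card α) (by omega)
    exact ⟨_, ht.map (Finite.equivFin α).symm⟩
  · exact exists_hasFiniteCuts_of_infinite

end Tournament

namespace WeakSelection

variable {X : Type*}

theorem isOpen_selTop_lt (σ : WeakSelection X) (a : X) : IsOpen[σ.selTop] {y | σ.lt y a} :=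
  TopologicalSpace.isOpen_generateFrom_of_mem ⟨a, Or.inl rfl⟩

theorem isOpen_selTop_gt (σ : WeakSelection X) (a : X) : IsOpen[σ.selTop] {y | σ.lt a y} :=
  TopologicalSpace.isOpen_generateFrom_of_mem ⟨a, Or.inr rfl⟩

end WeakSelection

namespace IsStar

variable {X : Type*} {P : Set (Set X)} {blk : X → Set X} {hblk : ∀ x, blk x ∈ P}
  {σ : WeakSelection ↥P} {h : ∀ p : ↥P, WeakSelection ↥(p : Set X)} {g : WeakSelection X}

theorem lt_iff_of_ne (hstar : IsStar P blk hblk σ h g)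
    (huniq : ∀ x : X, ∀ p ∈ P, x ∈ p → p = blk x)
    {p q : ↥P} {x y : X} (hx : x ∈ (p : Set X)) (hy : y ∈ (q : Set X)) (hpq : p ≠ q) :
    g.lt x y ↔ σ.lt p q := by
  have hpx : (⟨blk x, hblk x⟩ : ↥P) = p := Subtype.ext (huniq x p p.2 hx).symm
  have hqy : (⟨blk y, hblk y⟩ : ↥P) = q := Subtype.ext (huniq y q q.2 hy).symm
  rw [hstar.1 x y fun hxy => hpq (hpx.symm.trans (Subtype.ext hxy) |>.trans hqy), hpx, hqy]

theorem lt_iff_of_mem (hstar : IsStar P blk hblk σ h g)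
    (huniq : ∀ x : X, ∀ p ∈ P, x ∈ p → p = blk x)
    (p : ↥P) (x y : ↥(p : Set X)) : g.lt x y ↔ (h p).lt x y := by
  have hsel := hstar.2 p x y (huniq x p p.2 x.2).symm (huniq y p p.2 y.2).symm
  simp only [WeakSelection.lt, WeakSelection.le, hsel, Subtype.coe_inj, ne_eq]

theorem isOpen_selTop {t : Tournament ↥P} (hstar : IsStar P blk hblk t.toWeakSelection h g)
    (hmem : ∀ x : X, x ∈ blk x) (huniq : ∀ x : X, ∀ p ∈ P, x ∈ p → p = blk x)
    (hne : ∀ p ∈ P, Set.Nonempty p) {p : ↥P} {L U : Finset ↥P} (hcut : t.IsCut p L U) :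
    IsOpen[g.selTop] (p : Set X) := by
  let _ := g.selTop
  obtain ⟨hpL, hUp, hsep⟩ := hcut
  choose a ha using fun q : ↥P => hne q q.2
  have hlt {q r : ↥P} (hqr : q ≠ r) {x y : X} (hx : x ∈ (q : Set X)) (hy : y ∈ (r : Set X)) :
      g.lt x y ↔ t.lt q r := by
    rw [hstar.lt_iff_of_ne huniq hx hy hqr, t.toWeakSelection_lt_iff]
  have hp : (p : Set X) = (⋂ s ∈ L, {y | g.lt y (a s)}) ∩ ⋂ s ∈ U, {y | g.lt (a s) y} := by
    ext y
    simp only [Set.mem_inter_iff, Set.mem_iInter, Set.mem_ofPred_eq]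
    refine ⟨fun hy => ⟨fun s hs => ?_, fun s hs => ?_⟩, fun ⟨hyL, hyU⟩ => ?_⟩
    · exact (hlt (t.ne_of_lt (hpL s hs)) hy (ha s)).mpr (hpL s hs)
    · exact (hlt (t.ne_of_lt (hUp s hs)) (ha s) hy).mpr (hUp s hs)
    · let q : ↥P := ⟨blk y, hblk y⟩
      by_contra hyp
      have hqp : q ≠ p := fun hqp => hyp (hqp ▸ hmem y)
      rcases hsep q hqp with ⟨s, hs, hsq⟩ | ⟨s, hs, hqs⟩
      · exact t.asymm _ _ hsq ((hlt (t.ne_of_lt hsq).symm (hmem y) (ha s)).mp (hyL s hs))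
      · exact t.asymm _ _ hqs ((hlt (t.ne_of_lt hqs).symm (ha s) (hmem y)).mp (hyU s hs))
  rw [hp]
  exact (isOpen_biInter_finset fun s _ => g.isOpen_selTop_lt (a s)).inter
    (isOpen_biInter_finset fun s _ => g.isOpen_selTop_gt (a s))

theorem continuous [TopologicalSpace X]
    (hstar : IsStar P blk hblk σ h g) (hmem : ∀ x : X, x ∈ blk x)
    (huniq : ∀ x : X, ∀ p ∈ P, x ∈ p → p = blk x) (hopen : ∀ p ∈ P, IsOpen p)
    (hcont : ∀ p : ↥P, (h p).Continuous) : g.Continuous := by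
  intro x y hxy
  let p : ↥P := ⟨blk x, hblk x⟩
  let q : ↥P := ⟨blk y, hblk y⟩
  by_cases hpq : p = q
  · have hy : y ∈ (p : Set X) := hpq ▸ hmem y
    obtain ⟨U, V, hU, hV, hxU, hyV, hUV⟩ := hcont p ⟨x, hmem x⟩ ⟨y, hy⟩
      ((hstar.lt_iff_of_mem huniq p ⟨x, hmem x⟩ ⟨y, hy⟩).mp hxy)
    have hp : IsOpen (p : Set X) := hopen _ p.2
    refine ⟨(↑) '' U, (↑) '' V, hp.isOpenMap_subtype_val U hU, hp.isOpenMap_subtype_val V hV,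
      ⟨_, hxU, rfl⟩, ⟨_, hyV, rfl⟩, ?_⟩
    rintro _ ⟨s, hs, rfl⟩ _ ⟨t, ht, rfl⟩
    exact (hstar.lt_iff_of_mem huniq p s t).mpr (hUV s hs t ht)
  · have hσ : σ.lt p q := (hstar.lt_iff_of_ne huniq (hmem x) (hmem y) hpq).mp hxy
    exact ⟨p, q, hopen _ p.2, hopen _ q.2, hmem x, hmem y,
      fun s hs t ht => (hstar.lt_iff_of_ne huniq hs ht hpq).mpr hσ⟩

end IsStar

theorem stmt2_general {X : Type*} [TopologicalSpace X]
    (P : Set (Set X)) (blk : X → Set X)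
    (hmem : ∀ x : X, x ∈ blk x) (hblk : ∀ x, blk x ∈ P)
    (huniq : ∀ x : X, ∀ p ∈ P, x ∈ p → p = blk x)
    (hne : ∀ p ∈ P, Set.Nonempty p)
    (hcard : Cardinal.mk ↥P ≠ 2) :
    ∃ σ : WeakSelection ↥P,
      ∀ (h : ∀ p : ↥P, WeakSelection ↥(p : Set X)) (g : WeakSelection X),
        IsStar P blk hblk σ h g →
          (∀ p ∈ P, IsOpen[g.selTop] p) ∧
          ((∀ p ∈ P, IsOpen p) → (∀ p : ↥P, (h p).Continuous) → g.Continuous) := by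
  obtain ⟨t, ht⟩ := Tournament.exists_hasFiniteCuts hcard
  refine ⟨t.toWeakSelection, fun h g hstar => ⟨fun p hp => ?_, hstar.continuous hmem huniq⟩⟩
  obtain ⟨L, U, hcut⟩ := ht ⟨p, hp⟩
  exact hstar.isOpen_selTop hmem huniq hne hcut

/-- Lemma 2.3: if `P` is a partition of `X` with `|P| ≠ 2`, then `P` has a weak
selection `σ` such that every member of `P` is open in the selection topology
of `σ * h`, for every choice of weak selections `h p` on the blocks; moreover,
if `P` is an open partition of the (Hausdorff) space `X` and each `h p` is
continuous, then `σ * h` is continuous. -/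
theorem stmt2 {X : Type*} [TopologicalSpace X] [T2Space X]
    (P : Set (Set X)) (blk : X → Set X)
    (hmem : ∀ x : X, x ∈ blk x) (hblk : ∀ x, blk x ∈ P)
    (huniq : ∀ x : X, ∀ p ∈ P, x ∈ p → p = blk x)
    (hne : ∀ p ∈ P, Set.Nonempty p)
    (hcard : Cardinal.mk ↥P ≠ 2) :
    ∃ σ : WeakSelection ↥P,
      ∀ (h : ∀ p : ↥P, WeakSelection ↥(p : Set X)) (g : WeakSelection X),
        IsStar P blk hblk σ h g →
          (∀ p ∈ P, IsOpen[g.selTop] p) ∧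
          ((∀ p ∈ P, IsOpen p) → (∀ p : ↥P, (h p).Continuous) → g.Continuous) :=
  stmt2_general P blk hmem hblk huniq hne hcard
end

section
/- Let P be a partition of a set X, let S ∈ P, and suppose P \ {S} = Q ∪ R for disjoint subfamilies Q, R ⊆ P with |Q| ≥ 6 and |R| ≥ 6. Then there is a weak selection σ for P such that A ≤_σ B for every A ∈ Q ∪ {S} and B ∈ {S} ∪ R, and, for every choice of weak selections h_P for each P ∈ P, every member of P is open in the selection topology T_{σ*h} on X. -/
/-!
Well-order `Q`, put a chain of six points on top, and reverse every covering pair. In the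
resulting tournament each point `p` is cut out by finitely many strict comparisons: generically
`p₁ ≺ p ≺ p₂, p₄` for its successive covers `p ⋖ p₁ ⋖ p₂ ⋖ p₃ ⋖ p₄`, and on the top chain by a
finite check; moreover every point lies below some point of the chain. Stack `Q` below `S`
below the reverse of the same construction on `R`. Picking one point in each block, the finitely
many comparisons cutting out a block become open intervals of `T_{σ*h}` that meet exactly in
that block.
-/

open Topology

open Set Function

section Tournament

variable {α : Type*}

structure IsTournamentOn (r : α → α → Prop) (s : Set α) : Prop where
  asymm : ∀ ⦃x y⦄, r x y → ¬ r y x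
  total : ∀ ⦃x⦄, x ∈ s → ∀ ⦃y⦄, y ∈ s → x ≠ y → r x y ∨ r y x

/-- Every other point is excluded strictly (`r u a` or `r b u`, even for `u ∈ A ∪ B`): unlike
`{p} = ⋂ a ∈ A, (a, →) ∩ ⋂ b ∈ B, (←, b)`, this survives replacing points by blocks, inside which
a chosen representative says nothing about the order. -/
structure Isolates (r : α → α → Prop) (s A B : Set α) (p : α) : Prop where
  lower : ∀ a ∈ A, r a p
  upper : ∀ b ∈ B, r p b
  exclude : ∀ u ∈ s, u ≠ p → (∃ a ∈ A, r u a) ∨ ∃ b ∈ B, r b u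

structure IsIsolatingTournament (r : α → α → Prop) (s : Set α) : Prop
    extends IsTournamentOn r s where
  mem_of_rel : ∀ ⦃x y⦄, r x y → x ∈ s ∧ y ∈ s
  isolates : ∀ p ∈ s, ∃ A ⊆ s, ∃ B ⊆ s, A.Finite ∧ B.Finite ∧ B.Nonempty ∧ Isolates r s A B p
  cofinal : ∃ C ⊆ s, C.Finite ∧ ∀ u ∈ s, ∃ c ∈ C, r u c

variable {r r' : α → α → Prop} {s t A B : Set α} {p : α}

theorem Isolates.flip (h : Isolates r s A B p) : Isolates (flip r) s B A p :=
  ⟨h.upper, h.lower, fun u hu hup => (h.exclude u hu hup).symm⟩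

theorem Isolates.mono (h : Isolates r s A B p) (hr : ∀ x y, r x y → r' x y)
    (hout : ∀ u ∈ t, u ∉ s → u ≠ p → (∃ a ∈ A, r' u a) ∨ ∃ b ∈ B, r' b u) :
    Isolates r' t A B p where
  lower a ha := hr _ _ (h.lower a ha)
  upper b hb := hr _ _ (h.upper b hb)
  exclude u hu hup := by
    by_cases hus : u ∈ s
    · exact (h.exclude u hus hup).imp (fun ⟨a, ha, hua⟩ => ⟨a, ha, hr _ _ hua⟩)
        fun ⟨b, hb, hbu⟩ => ⟨b, hb, hr _ _ hbu⟩
    · exact hout u hu hus hup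

theorem Isolates.map {β : Type*} {f : α → β} (hf : Injective f) (h : Isolates r univ A B p) :
    Isolates (Relation.Map r f f) (range f) (f '' A) (f '' B) (f p) where
  lower := by
    rintro _ ⟨a, ha, rfl⟩
    exact (Relation.map_apply_apply hf hf r a p).2 (h.lower a ha)
  upper := by
    rintro _ ⟨b, hb, rfl⟩
    exact (Relation.map_apply_apply hf hf r p b).2 (h.upper b hb)
  exclude := by
    rintro _ ⟨u, rfl⟩ hup
    simp only [mem_image, exists_exists_and_eq_and, Relation.map_apply_apply hf hf]
    exact h.exclude u trivial (ne_of_apply_ne f hup)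

theorem IsIsolatingTournament.map {β : Type*} {f : α → β} (hf : Injective f)
    (h : IsIsolatingTournament r univ) : IsIsolatingTournament (Relation.Map r f f) (range f) where
  asymm := by
    rintro _ _ ⟨a, b, hab, rfl, rfl⟩ hba
    exact h.asymm hab ((Relation.map_apply_apply hf hf r b a).1 hba)
  total := by
    rintro _ ⟨a, rfl⟩ _ ⟨b, rfl⟩ hab
    simpa only [Relation.map_apply_apply hf hf] using h.total trivial trivial (ne_of_apply_ne f hab)
  mem_of_rel := by
    rintro _ _ ⟨a, b, -, rfl, rfl⟩
    exact ⟨mem_range_self a, mem_range_self b⟩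
  isolates := by
    rintro _ ⟨p, rfl⟩
    obtain ⟨A, -, B, -, hA, hB, hBne, hiso⟩ := h.isolates p trivial
    exact ⟨f '' A, image_subset_range f A, f '' B, image_subset_range f B, hA.image f, hB.image f,
      hBne.image f, hiso.map hf⟩
  cofinal := by
    obtain ⟨C, -, hC, hcof⟩ := h.cofinal
    refine ⟨f '' C, image_subset_range f C, hC.image f, ?_⟩
    rintro _ ⟨u, rfl⟩
    obtain ⟨c, hc, huc⟩ := hcof u trivial
    exact ⟨f c, mem_image_of_mem f hc, (Relation.map_apply_apply hf hf r u c).2 huc⟩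

end Tournament

theorem exists_weakSelection_lt_iff {α : Type*} {r : α → α → Prop} {s : Set α}
    (hr : IsTournamentOn r s) : ∃ σ : WeakSelection s, ∀ x y : s, σ.lt x y ↔ r x y := by
  classical
  refine ⟨⟨fun x y => if r x y then x else y, fun x y => ?_, fun x y => ?_⟩, fun x y => ?_⟩
  · split_ifs <;> simp
  · rcases eq_or_ne x y with rfl | hxy
    · rfl
    · rcases hr.total x.2 y.2 (Subtype.coe_ne_coe.2 hxy) with h | h
      · simp [h, hr.asymm h]
      · simp [h, hr.asymm h]
  · simp only [WeakSelection.lt, WeakSelection.le]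
    by_cases h : r x y
    · simp only [h, if_true, true_and, iff_true]
      rintro rfl
      exact hr.asymm h h
    · simp only [h, if_false, iff_false, not_and, not_not]
      exact Eq.symm

theorem WeakSelection.le_refl_s4 {X : Type*} (σ : WeakSelection X) (x : X) : σ.le x x :=
  (σ.mem_pair x x).elim id id

section CoverFlip

variable {L : Type*} [LinearOrder L] {x y z : L}

def coverFlip (x y : L) : Prop := (x < y ∧ ¬ x ⋖ y) ∨ y ⋖ x

theorem coverFlip_of_lt_of_lt (hxz : x < z) (hzy : z < y) : coverFlip x y :=
  Or.inl ⟨hxz.trans hzy, fun h => h.2 hxz hzy⟩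

theorem coverFlip_of_covBy (h : y ⋖ x) : coverFlip x y := Or.inr h

theorem isTournamentOn_coverFlip : IsTournamentOn (coverFlip (L := L)) univ where
  asymm x y := by
    rintro (⟨hxy, hc⟩ | hyx) (⟨hyx', hc'⟩ | hxy')
    · exact hxy.asymm hyx'
    · exact hc hxy'
    · exact hc' hyx
    · exact hyx.lt.asymm hxy'.lt
  total x _ y _ hxy := by
    rcases hxy.lt_or_gt with h | h
    · by_cases hc : x ⋖ y
      · exact Or.inr (coverFlip_of_covBy hc)
      · exact Or.inl (Or.inl ⟨h, hc⟩)
    · by_cases hc : y ⋖ x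
      · exact Or.inl (coverFlip_of_covBy hc)
      · exact Or.inr (Or.inl ⟨h, hc⟩)

theorem coverFlip_apply_iff {M : Type*} [LinearOrder M] (f : L ↪o M)
    (hf : (range f).OrdConnected) : coverFlip (f x) (f y) ↔ coverFlip x y := by
  simp only [coverFlip, f.lt_iff_lt, hf.apply_covBy_apply_iff]

theorem coverFlip_fin_iff {n : ℕ} {i j : Fin n} :
    coverFlip i j ↔ (i < j ∧ (i : ℕ) + 1 ≠ j) ∨ (j : ℕ) + 1 = i := by
  simp [coverFlip, Fin.covBy_iff]

instance {n : ℕ} : DecidableRel (coverFlip : Fin n → Fin n → Prop) :=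
  fun _ _ => decidable_of_iff _ coverFlip_fin_iff.symm

theorem isolates_coverFlip_of_covBy {p p₁ p₂ p₃ p₄ : L} (h₁ : p ⋖ p₁) (h₂ : p₁ ⋖ p₂)
    (h₃ : p₂ ⋖ p₃) (h₄ : p₃ ⋖ p₄) : Isolates coverFlip univ {p₁} {p₂, p₄} p where
  lower := by simpa using coverFlip_of_covBy h₁
  upper := by
    simpa using ⟨coverFlip_of_lt_of_lt h₁.lt h₂.lt,
      coverFlip_of_lt_of_lt h₁.lt (h₂.lt.trans (h₃.lt.trans h₄.lt))⟩
  exclude u _ hup := by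
    simp only [mem_singleton_iff, exists_eq_left, mem_insert_iff, exists_eq_or_imp]
    rcases hup.lt_or_gt with hu | hu
    · exact Or.inl (coverFlip_of_lt_of_lt hu h₁.lt)
    rcases (h₁.ge_of_gt hu).eq_or_lt with rfl | hu₁
    · exact Or.inr (Or.inl (coverFlip_of_covBy h₂))
    rcases (h₂.ge_of_gt hu₁).eq_or_lt with rfl | hu₂
    · exact Or.inl (coverFlip_of_covBy h₂)
    rcases (h₃.ge_of_gt hu₂).eq_or_lt with rfl | hu₃
    · exact Or.inr (Or.inr (coverFlip_of_covBy h₄))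
    · exact Or.inr (Or.inl (coverFlip_of_lt_of_lt h₃.lt hu₃))

theorem coverFlip_fin_six_isolates (k : Fin 6) (hk : 2 ≤ k) :
    (∃ a ≠ 0, coverFlip a k) ∧ (∃ b, coverFlip k b) ∧
      ∀ i ≠ k, (∃ a, coverFlip a k ∧ coverFlip i a) ∨ ∃ b, coverFlip k b ∧ coverFlip b i := by
  revert k; decide

theorem coverFlip_fin_six_cofinal (i : Fin 6) : ∃ j, coverFlip i j := by
  revert i; decide

theorem IsUpperSet.lt_of_notMem {s : Set L} (hs : IsUpperSet s) (ha : x ∈ s) (hy : y ∉ s) :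
    y < x :=
  lt_of_not_ge fun h => hy (hs h ha)

theorem isolates_coverFlip_apply (t : Fin 6 ↪o L) (ht : IsUpperSet (range t)) {k : Fin 6}
    (hk : 2 ≤ k) :
    Isolates coverFlip univ (t '' {a | coverFlip a k}) (t '' {b | coverFlip k b}) (t k) := by
  have htt (i j : Fin 6) : coverFlip (t i) (t j) ↔ coverFlip i j :=
    coverFlip_apply_iff t ht.ordConnected
  obtain ⟨⟨a₀, ha₀, ha₀k⟩, -, hexcl⟩ := coverFlip_fin_six_isolates k hk
  refine ⟨?_, ?_, fun u _ hu => ?_⟩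
  · rintro _ ⟨a, ha, rfl⟩
    exact (htt a k).2 ha
  · rintro _ ⟨b, hb, rfl⟩
    exact (htt k b).2 hb
  by_cases hut : u ∈ range t
  · obtain ⟨i, rfl⟩ := hut
    rcases hexcl i (ne_of_apply_ne t hu) with ⟨a, hak, hia⟩ | ⟨b, hkb, hbi⟩
    · exact Or.inl ⟨t a, mem_image_of_mem t hak, (htt i a).2 hia⟩
    · exact Or.inr ⟨t b, mem_image_of_mem t hkb, (htt b i).2 hbi⟩
  · exact Or.inl ⟨t a₀, mem_image_of_mem t ha₀k, coverFlip_of_lt_of_lt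
      (ht.lt_of_notMem (mem_range_self 0) hut) (t.lt_iff_lt.2 (Fin.pos_of_ne_zero ha₀))⟩

theorem isIsolatingTournament_coverFlip [IsStronglyAtomic L] (t : Fin 6 ↪o L)
    (ht : IsUpperSet (range t)) : IsIsolatingTournament (coverFlip (L := L)) univ where
  toIsTournamentOn := isTournamentOn_coverFlip
  mem_of_rel _ _ _ := ⟨trivial, trivial⟩
  isolates p _ := by
    rcases lt_or_ge p (t 2) with hp | hp
    · have ht_lt (i j : Fin 6) (hij : i < j := by decide) : t i < t j := t.lt_iff_lt.2 hij
      obtain ⟨p₁, h₁, hp₁⟩ := exists_covBy_le_of_lt hp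
      obtain ⟨p₂, h₂, hp₂⟩ := exists_covBy_le_of_lt (hp₁.trans_lt (ht_lt 2 3))
      obtain ⟨p₃, h₃, hp₃⟩ := exists_covBy_le_of_lt (hp₂.trans_lt (ht_lt 3 4))
      obtain ⟨p₄, h₄, -⟩ := exists_covBy_le_of_lt (hp₃.trans_lt (ht_lt 4 5))
      exact ⟨_, subset_univ _, _, subset_univ _, toFinite _, toFinite _, insert_nonempty _ _,
        isolates_coverFlip_of_covBy h₁ h₂ h₃ h₄⟩
    · obtain ⟨k, rfl⟩ := ht hp ⟨2, rfl⟩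
      have hk : 2 ≤ k := t.le_iff_le.1 hp
      obtain ⟨b₀, hb₀⟩ := (coverFlip_fin_six_isolates k hk).2.1
      exact ⟨t '' {a | coverFlip a k}, subset_univ _, t '' {b | coverFlip k b}, subset_univ _,
        toFinite _, toFinite _, ⟨t b₀, b₀, hb₀, rfl⟩, isolates_coverFlip_apply t ht hk⟩
  cofinal := by
    refine ⟨range t, subset_univ _, finite_range t, fun u _ => ?_⟩
    by_cases hut : u ∈ range t
    · obtain ⟨i, rfl⟩ := hut
      obtain ⟨j, hj⟩ := coverFlip_fin_six_cofinal i
      exact ⟨t j, mem_range_self j, (coverFlip_apply_iff t ht.ordConnected).2 hj⟩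
    · exact ⟨t 1, mem_range_self 1, coverFlip_of_lt_of_lt
        (ht.lt_of_notMem (mem_range_self 0) hut) (t.lt_iff_lt.2 (by decide))⟩

end CoverFlip

theorem exists_isIsolatingTournament {β : Type*} (Q : Set β) (hQ : 6 ≤ Cardinal.mk Q) :
    ∃ r : β → β → Prop, IsIsolatingTournament r Q := by
  obtain ⟨e⟩ : Nonempty (Fin 6 ↪ Q) := by
    rw [← Cardinal.lift_mk_le']
    simpa using hQ
  set t : Fin 6 ↪ β := e.trans (Embedding.subtype _)
  obtain ⟨_, _⟩ := exists_wellFoundedLT ↥(Q \ range t)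
  have : WellFoundedLT (↥(Q \ range t) ⊕ₗ Fin 6) := ⟨Sum.lex_wf wellFounded_lt wellFounded_lt⟩
  let top : Fin 6 ↪o ↥(Q \ range t) ⊕ₗ Fin 6 :=
    OrderEmbedding.ofStrictMono (fun i => toLex (Sum.inr i)) fun _ _ => Sum.Lex.inr_lt_inr_iff.2
  have htop : IsUpperSet (range top) := by
    rintro x y hxy ⟨i, rfl⟩
    induction y using Lex.rec with | _ y => ?_
    cases y with
    | inl a => exact absurd hxy Sum.Lex.not_inr_le_inl
    | inr j => exact ⟨j, rfl⟩
  let f : ↥(Q \ range t) ⊕ₗ Fin 6 → β := Sum.elim Subtype.val t ∘ ofLex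
  have hf : Injective f :=
    (Subtype.val_injective.sumElim t.injective fun a i h => a.2.2 ⟨i, h.symm⟩).comp
      ofLex.injective
  have hrange : range f = Q := by
    rw [ofLex.surjective.range_comp, Set.Sum.elim_range, Subtype.range_val,
      sdiff_union_of_subset]
    rintro _ ⟨i, rfl⟩
    exact (e i).2
  exact ⟨_, hrange ▸ (isIsolatingTournament_coverFlip top htop).map hf⟩

section Stack

variable {α : Type*} (Q R : Set α)

open scoped Classical in
noncomputable def level (a : α) : ℕ := if a ∈ Q then 0 else if a ∈ R then 2 else 1

/-- `R` enters reversed, so that its finite cofinal set lies below everything in `R`, which is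
what isolates `S`. -/
def stack (rQ rR : α → α → Prop) (a b : α) : Prop :=
  level Q R a < level Q R b ∨ rQ a b ∨ rR b a

variable {Q R} {rQ rR : α → α → Prop} {P : Set α} {S a b p : α}

theorem level_eq_zero_iff : level Q R a = 0 ↔ a ∈ Q := by
  unfold level; split_ifs <;> simp_all

theorem level_eq_two_iff (hQR : Disjoint Q R) : level Q R a = 2 ↔ a ∈ R := by
  unfold level; split_ifs with h h' <;> simp_all [hQR.notMem_of_mem_left]

theorem level_le_two : level Q R a ≤ 2 := by
  unfold level; split_ifs <;> omega

theorem eq_of_notMem_of_union_eq (hPQR : Q ∪ R = P \ {S}) (ha : a ∈ P) (haQ : a ∉ Q)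
    (haR : a ∉ R) : a = S := by
  by_contra haS
  have : a ∈ Q ∪ R := hPQR ▸ ⟨ha, haS⟩
  exact this.elim haQ haR

theorem level_eq_one (hPQR : Q ∪ R = P \ {S}) : level Q R S = 1 := by
  have hS : S ∉ Q ∪ R := by simp [hPQR]
  simp [level, (not_or.1 hS).1, (not_or.1 hS).2]

theorem stack_asymm (hQ : IsIsolatingTournament rQ Q) (hR : IsIsolatingTournament rR R)
    (hQR : Disjoint Q R) (h : stack Q R rQ rR a b) : ¬ stack Q R rQ rR b a := by
  have levelQ {x y : α} (hxy : rQ x y) : level Q R x = level Q R y := by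
    rw [level_eq_zero_iff.2 (hQ.mem_of_rel hxy).1, level_eq_zero_iff.2 (hQ.mem_of_rel hxy).2]
  have levelR {x y : α} (hxy : rR x y) : level Q R x = level Q R y := by
    rw [(level_eq_two_iff hQR).2 (hR.mem_of_rel hxy).1,
      (level_eq_two_iff hQR).2 (hR.mem_of_rel hxy).2]
  rcases h with h | h | h <;> rintro (h' | h' | h')
  · omega
  · have := levelQ h'; omega
  · have := levelR h'; omega
  · have := levelQ h; omega
  · exact hQ.asymm h h'
  · exact hQR.notMem_of_mem_left (hQ.mem_of_rel h).1 (hR.mem_of_rel h').1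
  · have := levelR h; omega
  · exact hQR.notMem_of_mem_left (hQ.mem_of_rel h').1 (hR.mem_of_rel h).1
  · exact hR.asymm h h'

theorem isTournamentOn_stack (hQ : IsIsolatingTournament rQ Q) (hR : IsIsolatingTournament rR R)
    (hQR : Disjoint Q R) (hPQR : Q ∪ R = P \ {S}) : IsTournamentOn (stack Q R rQ rR) P where
  asymm _ _ := stack_asymm hQ hR hQR
  total a ha b hb hab := by
    rcases lt_trichotomy (level Q R a) (level Q R b) with h | h | h
    · exact Or.inl (Or.inl h)
    · by_cases haQ : a ∈ Q
      · have hbQ : b ∈ Q := level_eq_zero_iff.1 (h ▸ level_eq_zero_iff.2 haQ)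
        exact (hQ.total haQ hbQ hab).imp (fun h => Or.inr (Or.inl h)) fun h => Or.inr (Or.inl h)
      by_cases haR : a ∈ R
      · have hbR : b ∈ R := (level_eq_two_iff hQR).1 (h ▸ (level_eq_two_iff hQR).2 haR)
        exact (hR.total haR hbR hab).symm.imp (fun h => Or.inr (Or.inr h))
          fun h => Or.inr (Or.inr h)
      · have hbQ : b ∉ Q := fun hbQ => haQ (level_eq_zero_iff.1 (h.trans (level_eq_zero_iff.2 hbQ)))
        have hbR : b ∉ R := fun hbR => haR
          ((level_eq_two_iff hQR).1 (h.trans ((level_eq_two_iff hQR).2 hbR)))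
        exact absurd ((eq_of_notMem_of_union_eq hPQR ha haQ haR).trans
          (eq_of_notMem_of_union_eq hPQR hb hbQ hbR).symm) hab
    · exact Or.inr (Or.inl h)

theorem stack_of_mem (hQR : Disjoint Q R) (hPQR : Q ∪ R = P \ {S}) (ha : a ∈ Q ∨ a = S)
    (hb : b = S ∨ b ∈ R) (hab : a ≠ b) : stack Q R rQ rR a b := by
  left
  rcases ha with ha | rfl <;> rcases hb with rfl | hb
  · rw [level_eq_zero_iff.2 ha, level_eq_one hPQR]; omega
  · rw [level_eq_zero_iff.2 ha, (level_eq_two_iff hQR).2 hb]; omega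
  · exact absurd rfl hab
  · rw [level_eq_one hPQR, (level_eq_two_iff hQR).2 hb]; omega

theorem exists_isolates_stack (hQ : IsIsolatingTournament rQ Q) (hR : IsIsolatingTournament rR R)
    (hQR : Disjoint Q R) (hPQR : Q ∪ R = P \ {S}) (hp : p ∈ P) :
    ∃ A ⊆ P, ∃ B ⊆ P, A.Finite ∧ B.Finite ∧ Isolates (stack Q R rQ rR) P A B p := by
  have hQRP : Q ∪ R ⊆ P := hPQR ▸ sdiff_subset
  have hQP : Q ⊆ P := subset_union_left.trans hQRP
  have hRP : R ⊆ P := subset_union_right.trans hQRP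
  by_cases hpQ : p ∈ Q
  · obtain ⟨A, hAQ, B, hBQ, hA, hB, ⟨b₀, hb₀⟩, hiso⟩ := hQ.isolates p hpQ
    refine ⟨A, hAQ.trans hQP, B, hBQ.trans hQP, hA, hB,
      hiso.mono (fun _ _ h => Or.inr (Or.inl h)) fun u _ huQ _ => Or.inr ⟨b₀, hb₀, Or.inl ?_⟩⟩
    rw [level_eq_zero_iff.2 (hBQ hb₀)]
    exact Nat.pos_of_ne_zero (level_eq_zero_iff.not.2 huQ)
  by_cases hpR : p ∈ R
  · obtain ⟨A, hAR, B, hBR, hA, hB, ⟨b₀, hb₀⟩, hiso⟩ := hR.isolates p hpR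
    refine ⟨B, hBR.trans hRP, A, hAR.trans hRP, hB, hA,
      hiso.flip.mono (fun _ _ h => Or.inr (Or.inr h)) fun u _ huR _ => Or.inl ⟨b₀, hb₀, Or.inl ?_⟩⟩
    rw [(level_eq_two_iff hQR).2 (hBR hb₀)]
    exact level_le_two.lt_of_ne ((level_eq_two_iff hQR).not.2 huR)
  obtain rfl := eq_of_notMem_of_union_eq hPQR hp hpQ hpR
  obtain ⟨CQ, hCQ, hCQf, hCQ'⟩ := hQ.cofinal
  obtain ⟨CR, hCR, hCRf, hCR'⟩ := hR.cofinal
  refine ⟨CQ, hCQ.trans hQP, CR, hCR.trans hRP, hCQf, hCRf, fun a ha => Or.inl ?_,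
    fun b hb => Or.inl ?_, fun u hu hup => ?_⟩
  · rw [level_eq_zero_iff.2 (hCQ ha), level_eq_one hPQR]; omega
  · rw [level_eq_one hPQR, (level_eq_two_iff hQR).2 (hCR hb)]; omega
  by_cases huQ : u ∈ Q
  · obtain ⟨c, hc, huc⟩ := hCQ' u huQ
    exact Or.inl ⟨c, hc, Or.inr (Or.inl huc)⟩
  by_cases huR : u ∈ R
  · obtain ⟨c, hc, huc⟩ := hCR' u huR
    exact Or.inr ⟨c, hc, Or.inr (Or.inr huc)⟩
  · exact absurd (eq_of_notMem_of_union_eq hPQR hu huQ huR) hup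

end Stack

theorem WeakSelection.isOpen_lt {X : Type*} (g : WeakSelection X) (a : X) :
    IsOpen[g.selTop] {y | g.lt y a} :=
  TopologicalSpace.isOpen_generateFrom_of_mem ⟨a, Or.inl rfl⟩

theorem WeakSelection.isOpen_gt {X : Type*} (g : WeakSelection X) (a : X) :
    IsOpen[g.selTop] {y | g.lt a y} :=
  TopologicalSpace.isOpen_generateFrom_of_mem ⟨a, Or.inr rfl⟩

theorem isOpen_selTop_of_isolates {X : Type*} {P : Set (Set X)} {blk : X → Set X}
    (hmem : ∀ x, x ∈ blk x) (hblk : ∀ x, blk x ∈ P) (huniq : ∀ x, ∀ p ∈ P, x ∈ p → p = blk x)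
    (hne : ∀ p ∈ P, p.Nonempty) {g : WeakSelection X} {r : Set X → Set X → Prop}
    (hgr : ∀ x y, blk x ≠ blk y → (g.lt x y ↔ r (blk x) (blk y)))
    (hasymm : ∀ ⦃a b⦄, r a b → ¬ r b a) {A B : Set (Set X)} {p : Set X} (hp : p ∈ P)
    (hAP : A ⊆ P) (hBP : B ⊆ P) (hA : A.Finite) (hB : B.Finite) (hiso : Isolates r P A B p) :
    IsOpen[g.selTop] p := by
  have : Nonempty X := ⟨(hne p hp).some⟩
  choose! pt hpt using hne
  have blk_pt (a : Set X) (ha : a ∈ P) : blk (pt a) = a := (huniq _ a ha (hpt a ha)).symm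
  have ne_of_rel {a b : Set X} (h : r a b) : a ≠ b := fun hab => hasymm h (hab ▸ h)
  have pt_lt_iff (a : Set X) (ha : a ∈ P) (y : X) (hay : a ≠ blk y) :
      g.lt (pt a) y ↔ r a (blk y) := by
    rw [hgr _ _ (by rwa [blk_pt a ha]), blk_pt a ha]
  have lt_pt_iff (b : Set X) (hb : b ∈ P) (y : X) (hyb : blk y ≠ b) :
      g.lt y (pt b) ↔ r (blk y) b := by
    rw [hgr _ _ (by rwa [blk_pt b hb]), blk_pt b hb]
  have hp_eq : p = (⋂ a ∈ A, {y | g.lt (pt a) y}) ∩ ⋂ b ∈ B, {y | g.lt y (pt b)} := by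
    ext y
    simp only [mem_inter_iff, mem_iInter, mem_ofPred_eq]
    constructor
    · intro hy
      obtain rfl := huniq y p hp hy
      exact ⟨fun a ha => (pt_lt_iff a (hAP ha) y (ne_of_rel (hiso.lower a ha))).2 (hiso.lower a ha),
        fun b hb => (lt_pt_iff b (hBP hb) y (ne_of_rel (hiso.upper b hb))).2 (hiso.upper b hb)⟩
    · rintro ⟨hlower, hupper⟩
      by_contra hyp
      rcases hiso.exclude (blk y) (hblk y) (fun h => hyp (h ▸ hmem y)) with
        ⟨a, ha, hya⟩ | ⟨b, hb, hby⟩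
      · exact hasymm hya ((pt_lt_iff a (hAP ha) y (ne_of_rel hya).symm).1 (hlower a ha))
      · exact hasymm hby ((lt_pt_iff b (hBP hb) y (ne_of_rel hby).symm).1 (hupper b hb))
  rw [hp_eq]
  let _ : TopologicalSpace X := g.selTop
  exact (hA.isOpen_biInter fun a _ => g.isOpen_gt _).inter
    (hB.isOpen_biInter fun b _ => g.isOpen_lt _)

theorem stmt4_general {X : Type*} (P : Set (Set X)) (blk : X → Set X)
    (hmem : ∀ x : X, x ∈ blk x) (hblk : ∀ x, blk x ∈ P)
    (huniq : ∀ x : X, ∀ p ∈ P, x ∈ p → p = blk x)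
    (hne : ∀ p ∈ P, Set.Nonempty p)
    (S : Set X)
    (Q R : Set (Set X))
    (hdisj : Disjoint Q R) (hunion : Q ∪ R = P \ {S})
    (hQ6 : 6 ≤ Cardinal.mk ↥Q) (hR6 : 6 ≤ Cardinal.mk ↥R) :
    ∃ σ : WeakSelection ↥P,
      (∀ A (hA : A ∈ P), ∀ B (hB : B ∈ P), (A ∈ Q ∨ A = S) → (B = S ∨ B ∈ R) →
        σ.le ⟨A, hA⟩ ⟨B, hB⟩) ∧
      ∀ (h : ∀ p : ↥P, WeakSelection ↥(p : Set X)) (g : WeakSelection X),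
        IsStar P blk hblk σ h g → ∀ p ∈ P, IsOpen[g.selTop] p := by
  obtain ⟨rQ, hQ⟩ := exists_isIsolatingTournament Q hQ6
  obtain ⟨rR, hR⟩ := exists_isIsolatingTournament R hR6
  have hr := isTournamentOn_stack hQ hR hdisj hunion
  obtain ⟨σ, hσ⟩ := exists_weakSelection_lt_iff hr
  refine ⟨σ, fun A hA B hB hAS hSB => ?_, fun h g hg p hp => ?_⟩
  · by_cases hAB : A = B
    · subst hAB
      exact σ.le_refl_s4 _
    · exact ((hσ _ _).2 (stack_of_mem hdisj hunion hAS hSB hAB)).1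
  · obtain ⟨A, hAP, B, hBP, hA, hB, hiso⟩ := exists_isolates_stack hQ hR hdisj hunion hp
    exact isOpen_selTop_of_isolates hmem hblk huniq hne
      (fun x y hxy => (hg.1 x y hxy).trans (hσ _ _)) hr.asymm hp hAP hBP hA hB hiso

/-- Corollary 2.5: if `P \ {S} = Q ∪ R` with `Q, R` disjoint, `|Q| ≥ 6` and
`|R| ≥ 6`, then `P` has a weak selection `σ` with `A ≤_σ B` for all
`A ∈ Q ∪ {S}`, `B ∈ {S} ∪ R`, such that every member of `P` is open in the
selection topology of `σ * h`, for every choice of weak selections `h p`. -/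
theorem stmt4 {X : Type*} (P : Set (Set X)) (blk : X → Set X)
    (hmem : ∀ x : X, x ∈ blk x) (hblk : ∀ x, blk x ∈ P)
    (huniq : ∀ x : X, ∀ p ∈ P, x ∈ p → p = blk x)
    (hne : ∀ p ∈ P, Set.Nonempty p)
    (S : Set X) (hS : S ∈ P)
    (Q R : Set (Set X)) (hQP : Q ⊆ P) (hRP : R ⊆ P)
    (hdisj : Disjoint Q R) (hunion : Q ∪ R = P \ {S})
    (hQ6 : 6 ≤ Cardinal.mk ↥Q) (hR6 : 6 ≤ Cardinal.mk ↥R) :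
    ∃ σ : WeakSelection ↥P,
      (∀ A (hA : A ∈ P), ∀ B (hB : B ∈ P), (A ∈ Q ∨ A = S) → (B = S ∨ B ∈ R) →
        σ.le ⟨A, hA⟩ ⟨B, hB⟩) ∧
      ∀ (h : ∀ p : ↥P, WeakSelection ↥(p : Set X)) (g : WeakSelection X),
        IsStar P blk hblk σ h g → ∀ p ∈ P, IsOpen[g.selTop] p :=
  stmt4_general P blk hmem hblk huniq hne S Q R hdisj hunion hQ6 hR6
end

section
/- Let (X,≤) be a suborderable Hausdorff space with compatible linear order ≤, let C be a connected component of X, and let U be a neighbourhood of C. Then there exists a ≤-convex open set O ⊆ X with C ⊆ O ⊆ U such that O is a union of connected components of X (i.e., O = C⁻¹(C(O))). In particular, the quotient map C : X → C[X] onto the space of components is a closed map. -/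
/-!
Components of a suborderable space are order-convex, and so is every open neighbourhood of a
component `C` once it is replaced by a union of convex basic open sets meeting `C`. Inside such a
convex open set `S`, the union of the components contained in `S` is again convex, and it is open:
a component that meets `S` without being contained in it must stick out above all of `S` or below
all of `S`, and by convexity at most one component does each, so only two closed sets have to be
removed from `S`. Saturated open neighbourhoods of components are exactly what makes the quotient
map onto the space of components closed.
-/

open Set Topology

section Order

variable {X : Type*} [LinearOrder X] {S : Set X}

theorem Set.OrdConnected.forall_lt_or_forall_gt_of_notMem (hS : S.OrdConnected) {w : X}
    (hw : w ∉ S) : (∀ o ∈ S, o < w) ∨ (∀ o ∈ S, w < o) := by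
  by_contra! h
  obtain ⟨⟨o₁, ho₁, h₁⟩, o₂, ho₂, h₂⟩ := h
  exact hw (hS.out ho₂ ho₁ ⟨h₂, h₁⟩)

theorem Set.OrdConnected.inter_nonempty_of_forall_lt {K₁ K₂ : Set X} (hK₁ : K₁.OrdConnected)
    (hK₂ : K₂.OrdConnected) {o₁ o₂ w₁ w₂ : X} (ho₁ : o₁ ∈ K₁ ∩ S) (ho₂ : o₂ ∈ K₂ ∩ S)
    (hw₁ : w₁ ∈ K₁) (hw₂ : w₂ ∈ K₂) (hSw₁ : ∀ o ∈ S, o < w₁) (hSw₂ : ∀ o ∈ S, o < w₂) :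
    (K₁ ∩ K₂).Nonempty := by
  rcases le_total o₁ o₂ with h | h
  · exact ⟨o₂, hK₁.out ho₁.1 hw₁ ⟨h, (hSw₁ o₂ ho₂.2).le⟩, ho₂.1⟩
  · exact ⟨o₁, ho₁.1, hK₂.out ho₂.1 hw₂ ⟨h, (hSw₂ o₁ ho₁.2).le⟩⟩

end Order

theorem isClosed_of_forall_mem_connectedComponent {X : Type*} [TopologicalSpace X] {s : Set X}
    (hsat : ∀ y ∈ s, connectedComponent y ⊆ s) (hs : ∀ y ∈ s, ∀ z ∈ s, z ∈ connectedComponent y) :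
    IsClosed s := by
  rcases s.eq_empty_or_nonempty with rfl | ⟨y, hy⟩
  · exact isClosed_empty
  · rw [← (hsat y hy).antisymm fun z hz => hs y hy z hz]
    exact isClosed_connectedComponent

theorem ConnectedComponents.isClosedMap_mk_of_exists_saturated {X : Type*} [TopologicalSpace X]
    (h : ∀ (x : X) (U : Set X), U ∈ 𝓝ˢ (connectedComponent x) →
      ∃ O : Set X, IsOpen O ∧ connectedComponent x ⊆ O ∧ O ⊆ U ∧
        ∀ y ∈ O, connectedComponent y ⊆ O) :
    IsClosedMap (ConnectedComponents.mk : X → ConnectedComponents X) := by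
  intro F hF
  rw [← isQuotientMap_coe.isClosed_preimage, connectedComponents_preimage_image,
    ← isOpen_compl_iff, isOpen_iff_forall_mem_open]
  intro x hx
  have hxF : connectedComponent x ⊆ Fᶜ := fun z hz hzF =>
    hx (mem_biUnion hzF (connectedComponent_eq_iff_mem.mp (connectedComponent_eq hz)))
  obtain ⟨O, hO, hxO, hOF, hsat⟩ := h x Fᶜ (hF.isOpen_compl.mem_nhdsSet.mpr hxF)
  refine ⟨O, fun y hyO hy => ?_, hO, hxO mem_connectedComponent⟩
  obtain ⟨z, hzF, hyz⟩ := mem_iUnion₂.mp hy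
  exact hOF (hsat y hyO (connectedComponent_eq_iff_mem.mp (connectedComponent_eq hyz))) hzF

section Suborderable

variable {X : Type*} [LinearOrder X] [TopologicalSpace X]

theorem IsPreconnected.ordConnected_of_isOpen_Iio_Ioi (hIio : ∀ a : X, IsOpen (Iio a))
    (hIoi : ∀ a : X, IsOpen (Ioi a)) {s : Set X} (hs : IsPreconnected s) : s.OrdConnected := by
  refine ⟨fun x hx y hy z hz => ?_⟩
  by_contra hzs
  have hsplit : s ⊆ Iio z ∪ Ioi z := fun w hw =>
    (lt_or_gt_of_ne fun hwz : w = z => hzs (hwz ▸ hw)).imp id id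
  obtain ⟨w, -, hwz, hzw⟩ := hs (Iio z) (Ioi z) (hIio z) (hIoi z) hsplit
    ⟨x, hx, hz.1.lt_of_ne fun h => hzs (h ▸ hx)⟩ ⟨y, hy, hz.2.lt_of_ne' fun h => hzs (h ▸ hy)⟩
  exact (hwz.trans hzw).false

theorem exists_isOpen_ordConnected_between
    (hbase : ∀ (x : X) (U : Set X), IsOpen U → x ∈ U →
      ∃ V : Set X, IsOpen V ∧ x ∈ V ∧ V ⊆ U ∧ V.OrdConnected)
    {C U : Set X} (hC : C.OrdConnected) (hU : IsOpen U) (hCU : C ⊆ U) :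
    ∃ S : Set X, IsOpen S ∧ S.OrdConnected ∧ C ⊆ S ∧ S ⊆ U := by
  choose V hVo hVmem hVU hVc using fun a : C => hbase a U hU (hCU a.2)
  have hCV : C ⊆ ⋃ a, V a := fun a ha => mem_iUnion.mpr ⟨⟨a, ha⟩, hVmem _⟩
  refine ⟨⋃ a, V a, isOpen_iUnion hVo, ⟨fun x hx y hy z hz => ?_⟩, hCV, iUnion_subset hVU⟩
  obtain ⟨a, hxa⟩ := mem_iUnion.mp hx
  obtain ⟨b, hyb⟩ := mem_iUnion.mp hy
  rcases le_total z a with hza | haz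
  · exact mem_iUnion.mpr ⟨a, (hVc a).out hxa (hVmem a) ⟨hz.1, hza⟩⟩
  rcases le_total (b : X) z with hbz | hzb
  · exact mem_iUnion.mpr ⟨b, (hVc b).out (hVmem b) hyb ⟨hbz, hz.2⟩⟩
  · exact hCV (hC.out a.2 b.2 ⟨haz, hzb⟩)

theorem setOf_connectedComponent_subset_eq {S : Set X} (hS : S.OrdConnected) :
    {y | connectedComponent y ⊆ S} =
      S \ ({x | (connectedComponent x ∩ S).Nonempty ∧
          ∃ w ∈ connectedComponent x, ∀ o ∈ S, o < w} ∪
        {x | (connectedComponent x ∩ S).Nonempty ∧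
          ∃ w ∈ connectedComponent x, ∀ o ∈ S, w < o}) := by
  ext y
  constructor
  · intro hy
    refine ⟨hy mem_connectedComponent, ?_⟩
    rintro (⟨-, w, hw, hSw⟩ | ⟨-, w, hw, hSw⟩)
    · exact (hSw w (hy hw)).false
    · exact (hSw w (hy hw)).false
  · rintro ⟨hyS, hy⟩ w hw
    by_contra hwS
    have hmeet : (connectedComponent y ∩ S).Nonempty := ⟨y, mem_connectedComponent, hyS⟩
    exact hy ((hS.forall_lt_or_forall_gt_of_notMem hwS).imp (fun h => ⟨hmeet, w, hw, h⟩)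
      fun h => ⟨hmeet, w, hw, h⟩)

end Suborderable

section ComponentsConvex

variable {X : Type*} [LinearOrder X] [TopologicalSpace X]
  (hconv : ∀ x : X, (connectedComponent x).OrdConnected)
include hconv

theorem isClosed_setOf_connectedComponent_exceeds (S : Set X) :
    IsClosed {x | (connectedComponent x ∩ S).Nonempty ∧
      ∃ w ∈ connectedComponent x, ∀ o ∈ S, o < w} := by
  refine isClosed_of_forall_mem_connectedComponent (fun y hy z hz => ?_) fun y hy z hz => ?_
  · rwa [mem_ofPred_eq, ← connectedComponent_eq hz]
  · obtain ⟨⟨o₁, ho₁⟩, w₁, hw₁, hSw₁⟩ := hy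
    obtain ⟨⟨o₂, ho₂⟩, w₂, hw₂, hSw₂⟩ := hz
    obtain ⟨p, hpy, hpz⟩ :=
      (hconv y).inter_nonempty_of_forall_lt (hconv z) ho₁ ho₂ hw₁ hw₂ hSw₁ hSw₂
    rw [connectedComponent_eq hpy, ← connectedComponent_eq hpz]
    exact mem_connectedComponent

theorem isClosed_setOf_connectedComponent_undercuts (S : Set X) :
    IsClosed {x | (connectedComponent x ∩ S).Nonempty ∧
      ∃ w ∈ connectedComponent x, ∀ o ∈ S, w < o} :=
  isClosed_setOf_connectedComponent_exceeds (X := Xᵒᵈ) (fun x => (hconv x).dual)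
    (OrderDual.ofDual ⁻¹' S)

theorem IsOpen.setOf_connectedComponent_subset {S : Set X} (hSo : IsOpen S)
    (hS : S.OrdConnected) : IsOpen {y | connectedComponent y ⊆ S} := by
  rw [setOf_connectedComponent_subset_eq hS]
  exact hSo.sdiff ((isClosed_setOf_connectedComponent_exceeds hconv S).union
    (isClosed_setOf_connectedComponent_undercuts hconv S))

theorem Set.OrdConnected.setOf_connectedComponent_subset {S : Set X} (hS : S.OrdConnected) :
    {y | connectedComponent y ⊆ S}.OrdConnected := by
  refine ⟨fun y₁ hy₁ y₂ hy₂ z hz w hw => ?_⟩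
  by_contra hwS
  have hzS : z ∈ S := hS.out (hy₁ mem_connectedComponent) (hy₂ mem_connectedComponent) hz
  rcases hS.forall_lt_or_forall_gt_of_notMem hwS with h | h
  · have hy₂z : y₂ ∈ connectedComponent z :=
      (hconv z).out mem_connectedComponent hw ⟨hz.2, (h y₂ (hy₂ mem_connectedComponent)).le⟩
    exact hwS (hy₂ (connectedComponent_eq hy₂z ▸ hw))
  · have hy₁z : y₁ ∈ connectedComponent z :=
      (hconv z).out hw mem_connectedComponent ⟨(h y₁ (hy₁ mem_connectedComponent)).le, hz.1⟩
    exact hwS (hy₁ (connectedComponent_eq hy₁z ▸ hw))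

theorem exists_isOpen_ordConnected_saturated_subset
    (hbase : ∀ (x : X) (U : Set X), IsOpen U → x ∈ U →
      ∃ V : Set X, IsOpen V ∧ x ∈ V ∧ V ⊆ U ∧ V.OrdConnected)
    {x : X} {U : Set X} (hU : U ∈ 𝓝ˢ (connectedComponent x)) :
    ∃ O : Set X, IsOpen O ∧ O.OrdConnected ∧ connectedComponent x ⊆ O ∧ O ⊆ U ∧
      ∀ y ∈ O, connectedComponent y ⊆ O := by
  obtain ⟨U', hU'o, hxU', hU'U⟩ := mem_nhdsSet_iff_exists.mp hU
  obtain ⟨S, hSo, hS, hxS, hSU'⟩ := exists_isOpen_ordConnected_between hbase (hconv x) hU'o hxU'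
  refine ⟨{y | connectedComponent y ⊆ S}, hSo.setOf_connectedComponent_subset hconv hS,
    hS.setOf_connectedComponent_subset hconv, fun y hy => ?_,
    fun y hy => hU'U (hSU' (hy mem_connectedComponent)), fun y hy z hz => ?_⟩
  · rwa [mem_ofPred_eq, ← connectedComponent_eq hy]
  · rwa [mem_ofPred_eq, ← connectedComponent_eq hz]

end ComponentsConvex

theorem stmt6_general {X : Type*} [LinearOrder X] [TopologicalSpace X]
    (hIio : ∀ a : X, IsOpen (Set.Iio a)) (hIoi : ∀ a : X, IsOpen (Set.Ioi a))
    (hbase : ∀ (x : X) (U : Set X), IsOpen U → x ∈ U →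
      ∃ V : Set X, IsOpen V ∧ x ∈ V ∧ V ⊆ U ∧ V.OrdConnected)
    (x₀ : X) (U : Set X) (hU : U ∈ nhdsSet (connectedComponent x₀)) :
    (∃ O : Set X, IsOpen O ∧ O.OrdConnected ∧
      connectedComponent x₀ ⊆ O ∧ O ⊆ U ∧
      ∀ y ∈ O, connectedComponent y ⊆ O) ∧
    IsClosedMap (ConnectedComponents.mk : X → ConnectedComponents X) := by
  have hconv : ∀ x : X, (connectedComponent x).OrdConnected := fun x =>
    isPreconnected_connectedComponent.ordConnected_of_isOpen_Iio_Ioi hIio hIoi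
  refine ⟨exists_isOpen_ordConnected_saturated_subset hconv hbase hU,
    ConnectedComponents.isClosedMap_mk_of_exists_saturated fun x V hV => ?_⟩
  obtain ⟨O, hO, -, hxO, hOV, hsat⟩ := exists_isOpen_ordConnected_saturated_subset hconv hbase hV
  exact ⟨O, hO, hxO, hOV, hsat⟩

/-- Proposition 3.2: in a suborderable space `(X, ≤)` (the linear order `≤` is
compatible: open rays are open and there is a base of order-convex open sets),
every neighbourhood `U` of a connected component `C` contains a `≤`-convex open
set `O ⊇ C` which is a union of connected components; in particular, the
quotient map onto the space of connected components is closed. -/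
theorem stmt6 {X : Type*} [LinearOrder X] [TopologicalSpace X] [T2Space X]
    (hIio : ∀ a : X, IsOpen (Set.Iio a)) (hIoi : ∀ a : X, IsOpen (Set.Ioi a))
    (hbase : ∀ (x : X) (U : Set X), IsOpen U → x ∈ U →
      ∃ V : Set X, IsOpen V ∧ x ∈ V ∧ V ⊆ U ∧ V.OrdConnected)
    (x₀ : X) (U : Set X) (hU : U ∈ nhdsSet (connectedComponent x₀)) :
    (∃ O : Set X, IsOpen O ∧ O.OrdConnected ∧
      connectedComponent x₀ ⊆ O ∧ O ⊆ U ∧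
      ∀ y ∈ O, connectedComponent y ⊆ O) ∧
    IsClosedMap (ConnectedComponents.mk : X → ConnectedComponents X) :=
  stmt6_general hIio hIoi hbase x₀ U hU
end

section
/- If X is a suborderable Hausdorff space, then the quotient space C[X] of connected components of X is strongly zero-dimensional. In particular, if C is a connected component of X and U ⊆ X is an open set containing C, then there exists a clopen set V ⊆ X with C ⊆ V ⊆ U. -/
open Topology

/-- A Hausdorff space is suborderable (Čech) if it admits a linear order whose
open-interval topology is coarser than its topology and which has a base of
order-convex open sets. -/
def Suborderable (X : Type*) [TopologicalSpace X] : Prop :=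
  ∃ l : LinearOrder X,
    (∀ a : X, IsOpen {x | l.lt x a}) ∧ (∀ a : X, IsOpen {x | l.lt a x}) ∧
    (∀ (x : X) (U : Set X), IsOpen U → x ∈ U →
      ∃ V : Set X, IsOpen V ∧ x ∈ V ∧ V ⊆ U ∧
        ∀ a ∈ V, ∀ b ∈ V, ∀ c : X, l.le a c → l.le c b → c ∈ V)

/-- A space is strongly zero-dimensional (covering dimension `≤ 0`): every
finite open cover has a finite refinement by pairwise disjoint open sets. -/
def StronglyZeroDimensional (X : Type*) [TopologicalSpace X] : Prop :=
  ∀ 𝒰 : Set (Set X), 𝒰.Finite → (∀ U ∈ 𝒰, IsOpen U) → ⋃₀ 𝒰 = Set.univ →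
    ∃ 𝒱 : Set (Set X), 𝒱.Finite ∧ (∀ V ∈ 𝒱, IsOpen V) ∧ ⋃₀ 𝒱 = Set.univ ∧
      (∀ V ∈ 𝒱, ∃ U ∈ 𝒰, V ⊆ U) ∧
      ∀ V ∈ 𝒱, ∀ W ∈ 𝒱, V ≠ W → V ∩ W = ∅

/-!
Connected components are order-convex, and two points `a < b` in different components are
separated by a clopen lower set: `[a, b]` is disconnected, say by closed sets `A ∋ a` and `B`, and
the points `z` such that `[a, z]` misses `B ∩ [a, b]` form such a set. An order-connected
component `P` of an open set has at most one point of `closure P \ P` at each end; cutting these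
off by clopen lower or upper sets gives a clopen subset of `P` around any component inside `P`.
The same cut works around `F ∩ P` when `P` is an order-connected component of `Gᶜ`, for disjoint
closed `F` and `G` with `G` a union of components. A convex neighbourhood of a point of `G` missing
`F` meets at most two of these pieces containing points of `F`, one on each side, so the union of
the clopen sets is still clopen. Hence disjoint closed sets of `C[X]` are separated by clopen sets,
which gives disjoint clopen refinements of finite open covers.
-/

open Set

/-- Čech's description of suborderable spaces; for a linear order `OrderClosedTopology` amounts to
open rays. -/
class GeneralizedOrderTopology (X : Type*) [TopologicalSpace X] [LinearOrder X] : Prop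
    extends OrderClosedTopology X where
  exists_isOpen_ordConnected_subset {x : X} {U : Set X} :
    IsOpen U → x ∈ U → ∃ V, IsOpen V ∧ V.OrdConnected ∧ x ∈ V ∧ V ⊆ U

theorem orderClosedTopology_of_isOpen_Iio_Ioi {X : Type*} [TopologicalSpace X] [LinearOrder X]
    (hIio : ∀ a : X, IsOpen (Iio a)) (hIoi : ∀ a : X, IsOpen (Ioi a)) :
    OrderClosedTopology X where
  isClosed_le' := isOpen_compl_iff.1 <| isOpen_prod_iff.2 fun a b (hba : ¬a ≤ b) => by
    by_cases hc : ∃ c, b < c ∧ c < a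
    · obtain ⟨c, hbc, hca⟩ := hc
      exact ⟨Ioi c, Iio c, hIoi c, hIio c, hca, hbc,
        fun _ ⟨hp₁, hp₂⟩ => not_le.2 (hp₂.trans hp₁)⟩
    · refine ⟨Ioi b, Iio a, hIoi b, hIio a, not_le.1 hba, not_le.1 hba, ?_⟩
      rintro ⟨x, y⟩ ⟨hx, hy⟩ hxy
      exact hc ⟨x, hx, lt_of_le_of_lt hxy hy⟩

theorem Suborderable.exists_generalizedOrderTopology {X : Type*} [TopologicalSpace X]
    (hX : Suborderable X) : ∃ _ : LinearOrder X, GeneralizedOrderTopology X := by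
  obtain ⟨l, hIio, hIoi, hbase⟩ := hX
  have := @orderClosedTopology_of_isOpen_Iio_Ioi X _ l hIio hIoi
  refine ⟨l, ⟨fun hU hx => ?_⟩⟩
  obtain ⟨V, hV, hxV, hVU, hconv⟩ := hbase _ _ hU hx
  exact ⟨V, hV, ⟨fun a ha b hb c hc => hconv a ha b hb c hc.1 hc.2⟩, hxV, hVU⟩

section LinearOrder

variable {X : Type*} [LinearOrder X]

theorem Set.OrdConnected.subset_ordConnectedComponent_of_mem {s N : Set X}
    (hN : N.OrdConnected) (hNs : N ⊆ s) {x y : X} (hyN : y ∈ N)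
    (hy : y ∈ ordConnectedComponent s x) : N ⊆ ordConnectedComponent s x := fun _ hz =>
  mem_ordConnectedComponent.2 <| uIcc_subset_uIcc_union_uIcc.trans <|
    union_subset (mem_ordConnectedComponent.1 hy) ((hN.uIcc_subset hyN hz).trans hNs)

theorem Set.OrdConnected.lt_or_gt_of_notMem {P : Set X} (hP : P.OrdConnected) {y : X}
    (hy : y ∉ P) : (∀ p ∈ P, p < y) ∨ ∀ p ∈ P, y < p := by
  by_contra! ⟨⟨p, hp, hyp⟩, q, hq, hqy⟩
  exact hy (hP.out hq hp ⟨hqy, hyp⟩)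

/-- The piece of `s` through `f` contains `z`, avoids `y` and leaves `N`, so it runs from `z`
past `z'`. -/
theorem mem_ordConnectedComponent_of_mem_uIcc {s N : Set X} (hN : N.OrdConnected)
    {y f z z' : X} (hyN : y ∈ N) (hys : y ∉ s) (hfN : f ∉ N)
    (hz : z ∈ ordConnectedComponent s f) (hz'N : z' ∈ N) (hzz' : z ∈ uIcc y z') :
    z' ∈ ordConnectedComponent s z := by
  have hfz : uIcc z f ⊆ s := uIcc_comm f z ▸ mem_ordConnectedComponent.1 hz
  have hyfz : y ∉ uIcc z f := fun h => hys (hfz h)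
  have hfyz' : f ∉ uIcc y z' := fun h => hfN (hN.uIcc_subset hyN hz'N h)
  have hz' : z' ∈ uIcc z f := by
    simp only [mem_uIcc] at hyfz hfyz' hzz' ⊢
    grind
  exact mem_ordConnectedComponent.2 ((uIcc_subset_uIcc_left hz').trans hfz)

end LinearOrder

theorem Set.OrdConnected.finite_closure_diff {X : Type*} [TopologicalSpace X] [LinearOrder X]
    [OrderClosedTopology X] {P : Set X} (hP : P.OrdConnected) : (closure P \ P).Finite := by
  have hupper : {y | y ∈ closure P ∧ ∀ p ∈ P, p < y}.Subsingleton := by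
    have key : ∀ y ∈ closure P, ∀ y', (∀ p ∈ P, p < y') → y ≤ y' := fun y hy y' hy' => by
      by_contra! h
      obtain ⟨p, hp, hpP⟩ := mem_closure_iff.1 hy _ isOpen_Ioi h
      exact lt_asymm hp (hy' p hpP)
    exact fun y hy y' hy' => le_antisymm (key y hy.1 y' hy'.2) (key y' hy'.1 y hy.2)
  have hlower : {y | y ∈ closure P ∧ ∀ p ∈ P, y < p}.Subsingleton := by
    have key : ∀ y ∈ closure P, ∀ y', (∀ p ∈ P, y' < p) → y' ≤ y := fun y hy y' hy' => by
      by_contra! h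
      obtain ⟨p, hp, hpP⟩ := mem_closure_iff.1 hy _ isOpen_Iio h
      exact lt_asymm hp (hy' p hpP)
    exact fun y hy y' hy' => le_antisymm (key y' hy'.1 y hy.2) (key y hy.1 y' hy'.2)
  refine (hupper.finite.union hlower.finite).subset fun y ⟨hy, hyP⟩ => ?_
  exact (hP.lt_or_gt_of_notMem hyP).imp (fun h => ⟨hy, h⟩) fun h => ⟨hy, h⟩

section Topology

variable {Z : Type*} [TopologicalSpace Z]

theorem exists_isClopen_between_of_finite_closure_diff {K P : Set Z} (hP : IsOpen P)
    (hfin : (closure P \ P).Finite) (hKP : K ⊆ P)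
    (hsep : ∀ y ∈ closure P \ P, ∃ D, IsClopen D ∧ K ⊆ D ∧ y ∉ D) :
    ∃ V, IsClopen V ∧ K ⊆ V ∧ V ⊆ P := by
  choose! D hD hKD hyD using hsep
  set I := ⋂ y ∈ closure P \ P, D y
  have hclosure : P ∩ I = closure P ∩ I := by
    refine (inter_subset_inter_left _ subset_closure).antisymm fun z ⟨hz, hzI⟩ => ⟨?_, hzI⟩
    by_contra hzP
    exact hyD z ⟨hz, hzP⟩ (mem_iInter₂.1 hzI z ⟨hz, hzP⟩)
  refine ⟨P ∩ I, ⟨?_, hP.inter (hfin.isOpen_biInter fun y hy => (hD y hy).isOpen)⟩,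
    subset_inter hKP (subset_iInter₂ hKD), inter_subset_left⟩
  rw [hclosure]
  exact isClosed_closure.inter (isClosed_biInter fun y hy => (hD y hy).isClosed)

theorem exists_pairwiseDisjoint_isClopen_refinement
    (hsep : ∀ F G : Set Z, IsClosed F → IsClosed G → Disjoint F G →
      ∃ U, IsClopen U ∧ F ⊆ U ∧ Disjoint U G)
    {𝒰 : Set (Set Z)} (h𝒰 : 𝒰.Finite) :
    ∀ K, IsClosed K → (∀ U ∈ 𝒰, IsOpen U) → K ⊆ ⋃₀ 𝒰 →
      ∃ 𝒱 : Set (Set Z), 𝒱.Finite ∧ (∀ V ∈ 𝒱, IsClopen V) ∧ K ⊆ ⋃₀ 𝒱 ∧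
        (∀ V ∈ 𝒱, ∃ U ∈ 𝒰, V ⊆ U) ∧ 𝒱.PairwiseDisjoint id := by
  induction 𝒰, h𝒰 using Set.Finite.induction_on with
  | empty =>
    intro K _ _ hK
    exact ⟨∅, finite_empty, by simp, by simpa using hK, by simp, pairwiseDisjoint_empty⟩
  | @insert U 𝒰 _ _ ih =>
    intro K hK hopen hKU
    obtain ⟨𝒱, h𝒱, hclopen, hK𝒱, hrefine, hdisj⟩ :=
      ih (K \ U) (hK.sdiff (hopen U (mem_insert _ _)))
        (fun U' hU' => hopen U' (mem_insert_of_mem _ hU')) fun x ⟨hxK, hxU⟩ => by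
          obtain ⟨U', hU', hxU'⟩ := hKU hxK
          exact ⟨U', (mem_insert_iff.1 hU').resolve_left (by rintro rfl; exact hxU hxU'), hxU'⟩
    have hW : IsClopen (⋃₀ 𝒱) := sUnion_eq_biUnion ▸ h𝒱.isClopen_biUnion hclopen
    obtain ⟨A, hA, hKA, hAU⟩ := hsep (K \ ⋃₀ 𝒱) Uᶜ (hK.sdiff hW.isOpen)
      (hopen U (mem_insert _ _)).isClosed_compl (disjoint_compl_right_iff_subset.2 fun x hx =>
        by_contra fun hxU => hx.2 (hK𝒱 ⟨hx.1, hxU⟩))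
    refine ⟨insert (A \ ⋃₀ 𝒱) 𝒱, h𝒱.insert _, forall_mem_insert.2 ⟨hA.diff hW, hclopen⟩,
      fun x hxK => ?_, forall_mem_insert.2 ⟨⟨U, mem_insert _ _,
        sdiff_subset.trans (disjoint_compl_right_iff_subset.1 hAU)⟩, fun V hV => ?_⟩,
      pairwiseDisjoint_insert.2 ⟨hdisj, fun V hV _ =>
        disjoint_sdiff_left.mono_right (subset_sUnion_of_mem hV)⟩⟩
    · by_cases hx : x ∈ ⋃₀ 𝒱
      · exact sUnion_mono (subset_insert _ _) hx
      · exact ⟨_, mem_insert _ _, hKA ⟨hxK, hx⟩, hx⟩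
    · obtain ⟨U', hU', hVU'⟩ := hrefine V hV
      exact ⟨U', mem_insert_of_mem _ hU', hVU'⟩

theorem stronglyZeroDimensional_of_exists_isClopen
    (hsep : ∀ F G : Set Z, IsClosed F → IsClosed G → Disjoint F G →
      ∃ U, IsClopen U ∧ F ⊆ U ∧ Disjoint U G) :
    StronglyZeroDimensional Z := fun 𝒰 h𝒰 hopen hcover => by
  obtain ⟨𝒱, h𝒱, hclopen, hcover', hrefine, hdisj⟩ :=
    exists_pairwiseDisjoint_isClopen_refinement hsep h𝒰 univ isClosed_univ hopen hcover.ge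
  exact ⟨𝒱, h𝒱, fun V hV => (hclopen V hV).isOpen, univ_subset_iff.1 hcover', hrefine,
    fun V hV W hW hVW => disjoint_iff_inter_eq_empty.1 (hdisj hV hW hVW)⟩

end Topology

section GeneralizedOrderTopology

variable {X : Type*} [TopologicalSpace X] [LinearOrder X] [GeneralizedOrderTopology X]

open GeneralizedOrderTopology

instance ordConnected_connectedComponent (x : X) : (connectedComponent x).OrdConnected :=
  isPreconnected_connectedComponent.ordConnected

theorem isOpen_ordConnectedComponent {s : Set X} (hs : IsOpen s) (x : X) :
    IsOpen (ordConnectedComponent s x) :=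
  isOpen_iff_forall_mem_open.2 fun y hy => by
    obtain ⟨N, hN, hNc, hyN, hNs⟩ :=
      exists_isOpen_ordConnected_subset hs (ordConnectedComponent_subset hy)
    exact ⟨N, hNc.subset_ordConnectedComponent_of_mem hNs hyN hy, hN, hyN⟩

theorem closure_ordConnectedComponent_inter_subset {s : Set X} (hs : IsOpen s) (x : X) :
    closure (ordConnectedComponent s x) ∩ s ⊆ ordConnectedComponent s x :=
  fun y ⟨hy, hys⟩ => by
    obtain ⟨N, hN, hNc, hyN, hNs⟩ := exists_isOpen_ordConnected_subset hs hys
    obtain ⟨z, hzN, hz⟩ := mem_closure_iff.1 hy N hN hyN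
    exact hNc.subset_ordConnectedComponent_of_mem hNs hzN hz hyN

theorem mem_closure_of_forall_exists_mem_uIcc {P S : Set X} {y : X} (hy : y ∈ closure P)
    (h : ∀ p ∈ P, ∃ s ∈ S, s ∈ uIcc p y) : y ∈ closure S :=
  mem_closure_iff.2 fun O hO hyO => by
    obtain ⟨N, hN, hNc, hyN, hNO⟩ := exists_isOpen_ordConnected_subset hO hyO
    obtain ⟨p, hpN, hpP⟩ := mem_closure_iff.1 hy N hN hyN
    obtain ⟨s, hs, hsp⟩ := h p hpP
    exact ⟨s, hNO (hNc.uIcc_subset hpN hyN hsp), hs⟩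

theorem isOpen_setOf_disjoint_Icc {K : Set X} (hK : IsClosed K) (a : X) :
    IsOpen {z | Disjoint (Icc a z) K} :=
  isOpen_iff_forall_mem_open.2 fun z hz => by
    have hzK : z ∉ K ∩ Ici a := fun h => disjoint_left.1 hz ⟨h.2, le_rfl⟩ h.1
    obtain ⟨N, hN, hNc, hzN, hNK⟩ := exists_isOpen_ordConnected_subset
      (hK.inter isClosed_Ici).isOpen_compl hzK
    refine ⟨N, fun w hw => disjoint_left.2 fun t ht htK => ?_, hN, hzN⟩
    rcases le_total t z with htz | hzt
    · exact disjoint_left.1 hz ⟨ht.1, htz⟩ htK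
    · exact hNK (hNc.uIcc_subset hzN hw (Icc_subset_uIcc ⟨hzt, ht.2⟩)) ⟨htK, ht.1⟩

theorem exists_isClopen_isLowerSet_of_closed_cover {a b : X} {A B : Set X} (hA : IsClosed A)
    (hB : IsClosed B) (hcover : Icc a b ⊆ A ∪ B) (hAB : Icc a b ∩ (A ∩ B) = ∅) (haA : a ∈ A)
    (hBne : (Icc a b ∩ B).Nonempty) : ∃ D, IsClopen D ∧ IsLowerSet D ∧ a ∈ D ∧ b ∉ D := by
  obtain ⟨k, hk, hkB⟩ := hBne
  refine ⟨{z | Disjoint (Icc a z) (Icc a b ∩ B)},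
    ⟨?_, isOpen_setOf_disjoint_Icc (isClosed_Icc.inter hB) a⟩,
    fun z w hwz hz => hz.mono_left (Icc_subset_Icc_right hwz), ?_,
    fun hb => disjoint_left.1 hb hk ⟨hk, hkB⟩⟩
  · rw [← isOpen_compl_iff, isOpen_iff_forall_mem_open]
    intro z hz
    obtain ⟨y, hy, hyK⟩ := not_disjoint_iff.1 hz
    rcases hy.2.lt_or_eq with hyz | rfl
    · exact ⟨Ioi y, fun w hw => not_disjoint_iff.2 ⟨y, ⟨hy.1, hw.le⟩, hyK⟩, isOpen_Ioi, hyz⟩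
    · -- `y ∈ B \ A`, so the points of `(a, y)` close to `y` lie in `B` too
      have hyA : y ∉ A := fun h => hAB.subset ⟨hyK.1, h, hyK.2⟩
      have hay : a < y := hy.1.lt_of_ne (by rintro rfl; exact hyA haA)
      obtain ⟨N, hN, -, hyN, hNA⟩ := exists_isOpen_ordConnected_subset hA.isOpen_compl hyA
      refine ⟨N ∩ Ioi a, fun w ⟨hwN, haw⟩ => not_disjoint_iff.2 ?_,
        hN.inter isOpen_Ioi, hyN, hay⟩
      rcases le_total y w with hyw | hwy
      · exact ⟨y, ⟨hy.1, hyw⟩, hyK⟩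
      · have hw : w ∈ Icc a b := ⟨haw.le, hwy.trans hyK.1.2⟩
        exact ⟨w, ⟨haw.le, le_rfl⟩, hw, (hcover hw).resolve_left (hNA hwN)⟩
  · refine disjoint_left.2 fun y hy hyK => hAB.subset ⟨hyK.1, ?_, hyK.2⟩
    rwa [le_antisymm hy.2 hy.1]

theorem exists_isClopen_isLowerSet_of_notMem_connectedComponent {a b : X} (hab : a ≤ b)
    (hb : b ∉ connectedComponent a) : ∃ D, IsClopen D ∧ IsLowerSet D ∧ a ∈ D ∧ b ∉ D := by
  have hIcc : ¬IsPreconnected (Icc a b) := fun h =>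
    hb (h.subset_connectedComponent (left_mem_Icc.2 hab) (right_mem_Icc.2 hab))
  simp only [isPreconnected_closed_iff, not_forall, not_nonempty_iff_eq_empty] at hIcc
  obtain ⟨A, B, hA, hB, hcover, hA', hB', hAB⟩ := hIcc
  rcases hcover (left_mem_Icc.2 hab) with haA | haB
  · exact exists_isClopen_isLowerSet_of_closed_cover hA hB hcover hAB haA hB'
  · exact exists_isClopen_isLowerSet_of_closed_cover hB hA
      (hcover.trans (union_comm A B).subset) (by rwa [inter_comm B A]) haB hA'

theorem exists_isClopen_of_notMem_connectedComponent {x y : X}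
    (hy : y ∉ connectedComponent x) :
    ∃ D, IsClopen D ∧ y ∉ D ∧ ∀ z, x ∈ uIcc z y → z ∈ D := by
  have hxy : x ≠ y := fun h => hy (h ▸ mem_connectedComponent)
  rcases hxy.lt_or_gt with hxy | hyx
  · obtain ⟨D, hD, hDl, hxD, hyD⟩ :=
      exists_isClopen_isLowerSet_of_notMem_connectedComponent hxy.le hy
    refine ⟨D, hD, hyD, fun z hz => hDl ?_ hxD⟩
    simp only [mem_uIcc] at hz
    grind
  · have hx : x ∉ connectedComponent y := fun h =>
      hy (connectedComponent_eq_iff_mem.1 (connectedComponent_eq_iff_mem.2 h).symm)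
    obtain ⟨D, hD, hDl, hyD, hxD⟩ :=
      exists_isClopen_isLowerSet_of_notMem_connectedComponent hyx.le hx
    refine ⟨Dᶜ, hD.compl, not_not.2 hyD, fun z hz hzD => hxD (hDl ?_ hzD)⟩
    simp only [mem_uIcc] at hz
    grind

theorem exists_isClopen_connectedComponent_subset {x : X} {U : Set X} (hU : IsOpen U)
    (hxU : connectedComponent x ⊆ U) :
    ∃ V, IsClopen V ∧ connectedComponent x ⊆ V ∧ V ⊆ U := by
  have hxP : connectedComponent x ⊆ ordConnectedComponent U x :=
    subset_ordConnectedComponent mem_connectedComponent hxU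
  obtain ⟨V, hV, hxV, hVP⟩ := exists_isClopen_between_of_finite_closure_diff
    (isOpen_ordConnectedComponent hU x) (OrdConnected.finite_closure_diff inferInstance)
    hxP fun y ⟨_, hyP⟩ => by
      obtain ⟨D, hD, hyD, hxD⟩ :=
        exists_isClopen_of_notMem_connectedComponent fun h => hyP (hxP h)
      exact ⟨D, hD, hD.connectedComponent_subset (hxD x left_mem_uIcc), hyD⟩
  exact ⟨V, hV, hxV, hVP.trans ordConnectedComponent_subset⟩

theorem exists_isClopen_inter_ordConnectedComponent {F G : Set X} (hF : IsClosed F)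
    (hG : IsClosed G) (hGsat : ∀ x ∉ G, connectedComponent x ⊆ Gᶜ) (hFG : Disjoint F G)
    (x : X) :
    ∃ V, IsClopen V ∧ F ∩ ordConnectedComponent Gᶜ x ⊆ V ∧ V ⊆ ordConnectedComponent Gᶜ x := by
  set P := ordConnectedComponent Gᶜ x
  refine exists_isClopen_between_of_finite_closure_diff
    (isOpen_ordConnectedComponent hG.isOpen_compl x)
    (OrdConnected.finite_closure_diff inferInstance) inter_subset_right fun y ⟨hy, hyP⟩ => ?_
  have hyG : y ∈ G := by_contra fun h =>
    hyP (closure_ordConnectedComponent_inter_subset hG.isOpen_compl x ⟨hy, h⟩)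
  by_cases hcut : ∃ p ∈ P, ∀ f ∈ F ∩ P, p ∈ uIcc f y
  · obtain ⟨p, hpP, hp⟩ := hcut
    have hpG : p ∉ G := ordConnectedComponent_subset hpP
    obtain ⟨D, hD, hyD, hpD⟩ := exists_isClopen_of_notMem_connectedComponent fun h =>
      hyP ((ordConnected_connectedComponent p).subset_ordConnectedComponent_of_mem (hGsat p hpG)
        mem_connectedComponent hpP h)
    exact ⟨D, hD, fun f hf => hpD f (hp f hf), hyD⟩
  · push Not at hcut
    have hyF : y ∈ closure (F ∩ P) := mem_closure_of_forall_exists_mem_uIcc hy fun p hpP => by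
      obtain ⟨f, hf, hpf⟩ := hcut p hpP
      refine ⟨f, hf, ?_⟩
      have hyf : y ∉ uIcc p f := fun h =>
        hyP (OrdConnected.uIcc_subset inferInstance hpP hf.2 h)
      simp only [mem_uIcc] at hpf hyf ⊢
      grind
    exact absurd hyG (hFG.notMem_of_mem_left (closure_minimal inter_subset_left hF hyF))

theorem exists_isOpen_forall_eq_of_notMem_uIcc {F G : Set X} (hF : IsClosed F)
    (hFG : Disjoint F G) {W : X → Set X} (hWP : ∀ x, W x ⊆ ordConnectedComponent Gᶜ x)
    (hWeq : ∀ x z, z ∈ ordConnectedComponent Gᶜ x → W z = W x) {y : X} (hyG : y ∈ G) :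
    ∃ N, IsOpen N ∧ y ∈ N ∧ ∀ z ∈ N ∩ ⋃ f ∈ F, W f, ∀ z' ∈ N ∩ ⋃ f ∈ F, W f,
      y ∉ uIcc z z' → W z' = W z := by
  obtain ⟨N, hN, hNc, hyN, hNF⟩ :=
    exists_isOpen_ordConnected_subset hF.isOpen_compl (hFG.notMem_of_mem_right hyG)
  refine ⟨N, hN, hyN, fun z ⟨hzN, hzU⟩ z' ⟨hz'N, hz'U⟩ hy => ?_⟩
  obtain ⟨f, hf, hzf⟩ := mem_iUnion₂.1 hzU
  obtain ⟨f', hf', hz'f'⟩ := mem_iUnion₂.1 hz'U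
  have hside : z ∈ uIcc y z' ∨ z' ∈ uIcc y z := by
    simp only [mem_uIcc] at hy ⊢
    grind
  rcases hside with h | h
  · exact hWeq z z' (mem_ordConnectedComponent_of_mem_uIcc hNc hyN (not_not_intro hyG)
      (hNF · hf) (hWP f hzf) hz'N h)
  · exact (hWeq z' z (mem_ordConnectedComponent_of_mem_uIcc hNc hyN (not_not_intro hyG)
      (hNF · hf') (hWP f' hz'f') hzN h)).symm

theorem isClosed_biUnion_of_subset_ordConnectedComponent {F G : Set X} (hF : IsClosed F)
    (hG : IsClosed G) (hFG : Disjoint F G) {W : X → Set X} (hW : ∀ x, IsClosed (W x))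
    (hWP : ∀ x, W x ⊆ ordConnectedComponent Gᶜ x)
    (hWeq : ∀ x z, z ∈ ordConnectedComponent Gᶜ x → W z = W x) :
    IsClosed (⋃ f ∈ F, W f) := by
  set U := ⋃ f ∈ F, W f
  have hU : ∀ z ∈ U, z ∈ W z ∧ W z ⊆ U := fun z hz => by
    obtain ⟨f, hf, hzf⟩ := mem_iUnion₂.1 hz
    rw [hWeq f z (hWP f hzf)]
    exact ⟨hzf, subset_biUnion_of_mem hf⟩
  refine closure_subset_iff_isClosed.1 fun y hy => ?_
  by_cases hyG : y ∈ G
  · exfalso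
    obtain ⟨N, hN, hyN, hside⟩ := exists_isOpen_forall_eq_of_notMem_uIcc hF hFG hWP hWeq hyG
    have hnot : ∀ S ⊆ N ∩ U, (∀ z ∈ S, ∀ z' ∈ S, y ∉ uIcc z z') → y ∉ closure S := by
      intro S hSU hS hyS
      obtain ⟨z, hz⟩ := closure_nonempty_iff.1 ⟨y, hyS⟩
      have hSW : S ⊆ W z := fun z' hz' =>
        hside z (hSU hz) z' (hSU hz') (hS z hz z' hz') ▸ (hU z' (hSU hz').2).1
      exact ordConnectedComponent_subset (hWP z (closure_minimal hSW (hW z) hyS)) hyG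
    have hsplit : N ∩ U ⊆ (N ∩ U ∩ Iio y) ∪ (N ∩ U ∩ Ioi y) := fun z hz =>
      (ne_of_mem_of_not_mem hyG (ordConnectedComponent_subset (hWP z (hU z hz.2).1))).symm
        |>.lt_or_gt.imp (⟨hz, ·⟩) (⟨hz, ·⟩)
    have hyNU := closure_mono hsplit (hN.inter_closure ⟨hyN, hy⟩)
    rw [closure_union] at hyNU
    rcases hyNU with h | h
    · exact hnot _ inter_subset_left (fun z hz z' hz' => notMem_uIcc_of_gt hz.2 hz'.2) h
    · exact hnot _ inter_subset_left (fun z hz z' hz' => notMem_uIcc_of_lt hz.2 hz'.2) h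
  · have hyP : y ∈ closure (ordConnectedComponent Gᶜ y ∩ U) :=
      (isOpen_ordConnectedComponent hG.isOpen_compl y).inter_closure
        ⟨self_mem_ordConnectedComponent.2 hyG, hy⟩
    obtain ⟨z, hzP, hzU⟩ := closure_nonempty_iff.1 ⟨y, hyP⟩
    have hPW : ordConnectedComponent Gᶜ y ∩ U ⊆ W y := fun z' ⟨hz'P, hz'U⟩ =>
      hWeq y z' hz'P ▸ (hU z' hz'U).1
    have hyW : y ∈ W y := closure_minimal hPW (hW y) hyP
    rw [← hWeq y z hzP] at hyW
    exact (hU z hzU).2 hyW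

theorem exists_isClopen_superset_disjoint {F G : Set X} (hF : IsClosed F) (hG : IsClosed G)
    (hGsat : ∀ x ∉ G, connectedComponent x ⊆ Gᶜ) (hFG : Disjoint F G) :
    ∃ U, IsClopen U ∧ F ⊆ U ∧ Disjoint U G := by
  have hpiece : ∀ S : Set X, ∃ V, IsClopen V ∧
      ∀ x, ordConnectedComponent Gᶜ x = S → F ∩ S ⊆ V ∧ V ⊆ S := by
    intro S
    by_cases hS : ∃ x, ordConnectedComponent Gᶜ x = S
    · obtain ⟨x, rfl⟩ := hS
      obtain ⟨V, hV, hFV, hVP⟩ := exists_isClopen_inter_ordConnectedComponent hF hG hGsat hFG x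
      exact ⟨V, hV, fun _ _ => ⟨hFV, hVP⟩⟩
    · exact ⟨∅, isClopen_empty, fun x hx => (hS ⟨x, hx⟩).elim⟩
  choose V hV hVP using hpiece
  have hWP : ∀ x, V (ordConnectedComponent Gᶜ x) ⊆ ordConnectedComponent Gᶜ x :=
    fun x => (hVP _ x rfl).2
  refine ⟨⋃ f ∈ F, V (ordConnectedComponent Gᶜ f),
    ⟨isClosed_biUnion_of_subset_ordConnectedComponent hF hG hFG (fun x => (hV _).isClosed) hWP
      fun x z hz => by rw [ordConnectedComponent_eq (mem_ordConnectedComponent.1 hz)],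
    isOpen_biUnion fun f _ => (hV _).isOpen⟩,
    fun f hf => mem_biUnion hf ((hVP _ f rfl).1
      ⟨hf, self_mem_ordConnectedComponent.2 (hFG.notMem_of_mem_left hf)⟩),
    disjoint_iUnion₂_left.2 fun f _ => disjoint_left.2 fun z hz =>
      ordConnectedComponent_subset (hWP f hz)⟩

theorem ConnectedComponents.exists_isClopen_superset_disjoint
    {F G : Set (ConnectedComponents X)} (hF : IsClosed F) (hG : IsClosed G)
    (hFG : Disjoint F G) : ∃ U, IsClopen U ∧ F ⊆ U ∧ Disjoint U G := by
  obtain ⟨U, hU, hFU, hUG⟩ := _root_.exists_isClopen_superset_disjoint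
    (hF.preimage continuous_coe) (hG.preimage continuous_coe)
    (fun x hx y hy => by simpa [coe_eq_coe'.2 hy] using hx) (hFG.preimage _)
  have hsat : mk ⁻¹' (mk '' U) = U :=
    (connectedComponents_preimage_image U).trans hU.biUnion_connectedComponent_eq
  refine ⟨mk '' U, isQuotientMap_coe.isClopen_preimage.1 (by rwa [hsat]), ?_,
    disjoint_image_left.2 hUG⟩
  rw [← image_preimage_eq F surjective_coe]
  exact image_mono hFU

end GeneralizedOrderTopology

theorem stmt8_general {X : Type*} [TopologicalSpace X]
    (hX : Suborderable X) :
    StronglyZeroDimensional (ConnectedComponents X) ∧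
    ∀ (x : X) (U : Set X), IsOpen U → connectedComponent x ⊆ U →
      ∃ V : Set X, IsClopen V ∧ connectedComponent x ⊆ V ∧ V ⊆ U := by
  obtain ⟨_, _⟩ := hX.exists_generalizedOrderTopology
  exact ⟨stronglyZeroDimensional_of_exists_isClopen fun _ _ hF hG hFG =>
      ConnectedComponents.exists_isClopen_superset_disjoint hF hG hFG,
    fun _ _ hU hxU => exists_isClopen_connectedComponent_subset hU hxU⟩

/-- Corollary 3.4: if `X` is a suborderable Hausdorff space, then the quotient
space of connected components is strongly zero-dimensional; in particular,
every open set containing a component contains a clopen set around it. -/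
theorem stmt8 {X : Type*} [TopologicalSpace X] [T2Space X]
    (hX : Suborderable X) :
    StronglyZeroDimensional (ConnectedComponents X) ∧
    ∀ (x : X) (U : Set X), IsOpen U → connectedComponent x ⊆ U →
      ∃ V : Set X, IsClopen V ∧ connectedComponent x ⊆ V ∧ V ⊆ U :=
  stmt8_general hX
end

section
/- Let (X,≤) be a metrizable suborderable Hausdorff space with compatible linear order ≤ and compatible convex metric ρ. If C is a connected component of X and ε > 0, then every connected component S of X with S ≠ C and S ⊆ Δ(C,ε) satisfies diam(S) ≤ ε/2. -/
/-
A component `S ≠ C` is disjoint from `C`, and both are order-convex because the open rays separate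
any set missing a point between two of its members. Hence `S` lies entirely on one side of `C`,
say below it. For `a ≤ b` in `S`, pick `c ∈ C` within `ε / 2` of the endpoint farther from `C`
(possible since `Δ(C, ε) ⊆ O(C, ε / 2)`); then `a ≤ b ≤ c` and convexity of `ρ` give
`ρ(a, b) ≤ ρ(a, c) < ε / 2`.
-/

open Topology

section MetricSuborderable

variable {X : Type*} [MetricSpace X] [LinearOrder X]

/-- `(←, C)`: the points lying strictly below every point of `C`. -/
def leftOf (C : Set X) : Set X := {x | ∀ c ∈ C, x < c}

/-- `(C, →)`: the points lying strictly above every point of `C`. -/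
def rightOf (C : Set X) : Set X := {x | ∀ c ∈ C, c < x}

/-- `ℓ(C) = |cl((←, C)) ∩ C|`. -/
noncomputable def ell (C : Set X) : ℕ := (closure (leftOf C) ∩ C).ncard

/-- `r(C) = |C ∩ cl((C, →))|`. -/
noncomputable def rr (C : Set X) : ℕ := (C ∩ closure (rightOf C)).ncard

/-- The open `δ`-neighbourhood `O(C, δ)` of a set `C`. -/
def ballAround (C : Set X) (δ : ℝ) : Set X := {x | ∃ c ∈ C, dist x c < δ}

/-- The neighbourhood `Δ(C, ε)` of a component `C`; note that
`(←, C] = (C, →)ᶜ` and `[C, →) = (←, C)ᶜ`. -/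
noncomputable def Delta (C : Set X) (ε : ℝ) : Set X :=
  if ell C = 0 ∧ rr C = 0 then C
  else if ell C ≠ 0 ∧ rr C = 0 then ballAround C (ε / 2) ∩ (rightOf C)ᶜ
  else if ell C = 0 ∧ rr C ≠ 0 then ballAround C (ε / 2) ∩ (leftOf C)ᶜ
  else ballAround C (ε / 2)

/-- `D[X]`: the clopen sets that are a connected component or meet infinitely
many connected components. -/
def DD (X : Type*) [TopologicalSpace X] : Set (Set X) :=
  {U | IsClopen U ∧ ((∃ x : X, U = connectedComponent x) ∨
    {C : Set X | ∃ x ∈ U, C = connectedComponent x}.Infinite)}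

/-- `C_ε[U]`: the connected components of `U` of diameter at least `ε`. -/
noncomputable def compsGE (U : Set X) (ε : ℝ) : Set (Set X) :=
  {C | (∃ x ∈ U, C = connectedComponentIn U x) ∧
    ENNReal.ofReal ε ≤ EMetric.diam C}

/-- `D[X, ε]`: the members of `D[X]` of diameter `< ε`, or contained in
`Δ(C, ε)` for some component `C ∈ C_ε[U]`. -/
noncomputable def DXeps (X : Type*) [MetricSpace X] [LinearOrder X] (ε : ℝ) :
    Set (Set X) :=
  {U | U ∈ DD X ∧ (EMetric.diam U < ENNReal.ofReal ε ∨
    ∃ C ∈ compsGE U ε, U ⊆ Delta C ε)}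

/-- `κ[C]`: the least `n` with `diam C ≥ 2^(-n)`. -/
noncomputable def kappa (C : Set X) : ℕ :=
  sInf {n : ℕ | ENNReal.ofReal ((2 : ℝ) ^ (-(n : ℤ))) ≤ EMetric.diam C}

/-- `A < B` pointwise for subsets of a linear order. -/
def setBelow (A B : Set X) : Prop := ∀ a ∈ A, ∀ b ∈ B, a < b

end MetricSuborderable

theorem IsPreconnected.ordConnected_of_isOpen_Iio_Ioi_s12 {X : Type*} [TopologicalSpace X]
    [LinearOrder X] (hIio : ∀ a : X, IsOpen (Set.Iio a)) (hIoi : ∀ a : X, IsOpen (Set.Ioi a))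
    {T : Set X} (hT : IsPreconnected T) : T.OrdConnected := by
  refine ⟨fun a ha b hb z hz => ?_⟩
  by_contra hzT
  have hcover : T ⊆ Set.Iio z ∪ Set.Ioi z := fun t ht =>
    lt_or_gt_of_ne (fun h => hzT (h ▸ ht))
  obtain ⟨w, -, hwz, hzw⟩ := hT _ _ (hIio z) (hIoi z) hcover
    ⟨a, ha, hz.1.lt_of_ne (by rintro rfl; exact hzT ha)⟩
    ⟨b, hb, hz.2.lt_of_ne' (by rintro rfl; exact hzT hb)⟩
  exact lt_asymm hwz hzw

theorem Set.OrdConnected.forall_lt_or_forall_lt_of_disjoint {X : Type*} [LinearOrder X]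
    {S C : Set X} (hS : S.OrdConnected) (hC : C.OrdConnected) (hSC : Disjoint S C) :
    (∀ s ∈ S, ∀ c ∈ C, s < c) ∨ (∀ s ∈ S, ∀ c ∈ C, c < s) := by
  by_cases hlt : ∃ s ∈ S, ∃ c ∈ C, s < c
  · obtain ⟨s, hs, c, hc, hsc⟩ := hlt
    refine Or.inl fun s' hs' c' hc' => lt_of_not_ge fun hcs' => ?_
    rcases le_or_gt c' s with hc's | hsc'
    · exact hSC.ne_of_mem hs (hC.out hc' hc ⟨hc's, hsc.le⟩) rfl
    · exact hSC.ne_of_mem (hS.out hs hs' ⟨hsc'.le, hcs'⟩) hc' rfl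
  · push Not at hlt
    exact Or.inr fun s hs c hc => (hlt s hs c hc).lt_of_ne (hSC.ne_of_mem hs hc).symm

section MetricSuborderable

variable {X : Type*} [MetricSpace X] [LinearOrder X]

theorem Delta_subset_ballAround {C : Set X} {ε : ℝ} (hε : 0 < ε) :
    Delta C ε ⊆ ballAround C (ε / 2) := by
  have hC : C ⊆ ballAround C (ε / 2) := fun c hc => ⟨c, hc, by simpa using hε⟩
  unfold Delta
  split_ifs
  exacts [hC, Set.inter_subset_left, Set.inter_subset_left, subset_rfl]

theorem ediam_le_of_subset_ballAround
    (hconv : ∀ x a b y : X, x ≤ a → a ≤ b → b ≤ y → dist a b ≤ dist x y)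
    {S C : Set X} {δ : ℝ} (hS : S ⊆ ballAround C δ)
    (hside : (∀ s ∈ S, ∀ c ∈ C, s < c) ∨ (∀ s ∈ S, ∀ c ∈ C, c < s)) :
    Metric.ediam S ≤ ENNReal.ofReal δ := by
  have hle : ∀ a ∈ S, ∀ b ∈ S, a ≤ b → dist a b ≤ δ := by
    intro a ha b hb hab
    rcases hside with hbelow | habove
    · obtain ⟨c, hc, hac⟩ := hS ha
      calc dist a b ≤ dist a c := hconv a a b c le_rfl hab (hbelow b hb c hc).le
        _ ≤ δ := hac.le
    · obtain ⟨c, hc, hbc⟩ := hS hb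
      calc dist a b ≤ dist c b := hconv c a b b (habove a ha c hc).le hab le_rfl
        _ = dist b c := dist_comm c b
        _ ≤ δ := hbc.le
  refine Metric.ediam_le_of_forall_dist_le fun a ha b hb => ?_
  rcases le_total a b with hab | hba
  · exact hle a ha b hb hab
  · exact dist_comm a b ▸ hle b hb a ha hba

end MetricSuborderable

theorem stmt12_general {X : Type*} [MetricSpace X] [LinearOrder X]
    (hconv : ∀ x a b y : X, x ≤ a → a ≤ b → b ≤ y → dist a b ≤ dist x y)
    (hIio : ∀ a : X, IsOpen (Set.Iio a)) (hIoi : ∀ a : X, IsOpen (Set.Ioi a))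
    (x₀ y₀ : X) (ε : ℝ) (hε : 0 < ε)
    (hne : connectedComponent y₀ ≠ connectedComponent x₀)
    (hsub : connectedComponent y₀ ⊆ Delta (connectedComponent x₀) ε) :
    EMetric.diam (connectedComponent y₀) ≤ ENNReal.ofReal (ε / 2) := by
  have hordConnected : ∀ x : X, (connectedComponent x).OrdConnected := fun x =>
    isPreconnected_connectedComponent.ordConnected_of_isOpen_Iio_Ioi_s12 hIio hIoi
  have hside := (hordConnected y₀).forall_lt_or_forall_lt_of_disjoint (hordConnected x₀)
    (connectedComponent_disjoint hne)
  exact ediam_le_of_subset_ballAround hconv (hsub.trans (Delta_subset_ballAround hε)) hside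

/-- Proposition 4.2: in a metrizable suborderable space `(X, ≤)` with
compatible convex metric, for a connected component `C` and `ε > 0`, any other
connected component `S ⊆ Δ(C, ε)` has diameter at most `ε / 2`. -/
theorem stmt12 {X : Type*} [MetricSpace X] [LinearOrder X]
    (hconv : ∀ x a b y : X, x ≤ a → a ≤ b → b ≤ y → dist a b ≤ dist x y)
    (hIio : ∀ a : X, IsOpen (Set.Iio a)) (hIoi : ∀ a : X, IsOpen (Set.Ioi a))
    (hbase : ∀ (x : X) (U : Set X), IsOpen U → x ∈ U →
      ∃ V : Set X, IsOpen V ∧ x ∈ V ∧ V ⊆ U ∧ V.OrdConnected)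
    (x₀ y₀ : X) (ε : ℝ) (hε : 0 < ε)
    (hne : connectedComponent y₀ ≠ connectedComponent x₀)
    (hsub : connectedComponent y₀ ⊆ Delta (connectedComponent x₀) ε) :
    EMetric.diam (connectedComponent y₀) ≤ ENNReal.ofReal (ε / 2) :=
  stmt12_general hconv hIio hIoi x₀ y₀ ε hε hne hsub
end
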